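/- arXiv:2403.10400 — 8 statements merged into one kernel-verified Lean document; each statement's English description precedes it below -/
import Mathlib

section
/- For any multi-index α ∈ ℕ_0^d and any homogeneous polynomial f_m of degree m on ℂ^d, one has ‖f_m‖_a ≤ ‖z^α f_m‖_a ≤ C_{α,m} ‖f_m‖_a, where C_{α,m} = sup over multi-indices β with |β| = m of sqrt((α+β)!/β!). Moreover C_{α,m} is the smallest constant for which the upper bound holds over all homogeneous polynomials of degree m. -/
/-!
Multiplication by `z^α` moves the coefficient of `z^β` to `z^(α+β)`, so
`‖z^α f‖_a² = Σ_β (α+β)! |f_β|²`, which is compared term by term with `‖f‖_a² = Σ_β β! |f_β|²`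
using `β! ≤ (α+β)! ≤ C_{α,m}² β!` for `|β| = m`. There are finitely many such `β`, so the
supremum `C_{α,m}` is attained at some `β₀`, and `f = z^β₀` shows that it cannot be improved.
-/

open MvPolynomial Finset

/-- Multi-index factorial `α! = α₁! ⋯ α_d!`. -/
def mfact {d : ℕ} (α : Fin d →₀ ℕ) : ℕ := ∏ i, (α i).factorial

/-- The apolar (Fischer/Bombieri) inner product `⟨P,Q⟩_a = Σ_α α! c_α conj(d_α)`. -/
noncomputable def apolar {d : ℕ} (P Q : MvPolynomial (Fin d) ℂ) : ℂ :=
  ∑ α ∈ P.support ∪ Q.support, (mfact α : ℂ) * P.coeff α * (starRingEnd ℂ) (Q.coeff α)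

/-- The squared apolar norm. -/
noncomputable def apolarNormSq {d : ℕ} (P : MvPolynomial (Fin d) ℂ) : ℝ :=
  ∑ α ∈ P.support, (mfact α : ℝ) * ‖P.coeff α‖ ^ 2

/-- The apolar norm. -/
noncomputable def apolarNorm {d : ℕ} (P : MvPolynomial (Fin d) ℂ) : ℝ :=
  Real.sqrt (apolarNormSq P)

/-- The mixed partial derivative `D^α = ∂^{α₁}_1 ⋯ ∂^{α_d}_d` as a linear endomorphism. -/
noncomputable def Dmulti {d : ℕ} (α : Fin d →₀ ℕ) :
    Module.End ℂ (MvPolynomial (Fin d) ℂ) :=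
  (List.ofFn fun i : Fin d =>
    ((MvPolynomial.pderiv i).toLinearMap : Module.End ℂ (MvPolynomial (Fin d) ℂ)) ^ α i).prod

/-- The differential operator `Q*(D)`: conjugate the coefficients of `Q` and replace
each variable by the corresponding partial derivative. -/
noncomputable def Dop {d : ℕ} (Q : MvPolynomial (Fin d) ℂ) :
    Module.End ℂ (MvPolynomial (Fin d) ℂ) :=
  ∑ α ∈ Q.support, (starRingEnd ℂ) (Q.coeff α) • Dmulti α


lemma MvPolynomial.IsHomogeneous.sum_eq_of_mem_support {σ R : Type*} [Fintype σ]
    [CommSemiring R] {f : MvPolynomial σ R} {m : ℕ} (hf : f.IsHomogeneous m) {β : σ →₀ ℕ}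
    (hβ : β ∈ f.support) : ∑ i, β i = m := by
  rw [← Finsupp.degree_eq_sum, Finsupp.degree_eq_weight_one]
  exact hf (mem_support_iff.mp hβ)

lemma isHomogeneous_monomial_of_sum_eq {σ R : Type*} [Fintype σ] [CommSemiring R]
    {β : σ →₀ ℕ} {m : ℕ} (hβ : ∑ i, β i = m) (r : R) : (monomial β r).IsHomogeneous m :=
  isHomogeneous_monomial r (by rwa [Finsupp.degree_eq_sum])

section ApolarNorm

variable {d : ℕ}

lemma mfact_pos (α : Fin d →₀ ℕ) : 0 < mfact α :=
  Finset.prod_pos fun _ _ => Nat.factorial_pos _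

lemma mfact_le_mfact_add (α β : Fin d →₀ ℕ) : mfact β ≤ mfact (α + β) :=
  Finset.prod_le_prod' fun _ _ => Nat.factorial_le (by simp)

lemma support_monomial_one_mul (α : Fin d →₀ ℕ) (f : MvPolynomial (Fin d) ℂ) :
    (monomial α (1 : ℂ) * f).support = f.support.map (addLeftEmbedding α) :=
  AddMonoidAlgebra.support_coeff_single_mul f 1 (by simp) α

lemma apolarNormSq_monomial_one_mul (α : Fin d →₀ ℕ) (f : MvPolynomial (Fin d) ℂ) :
    apolarNormSq (monomial α (1 : ℂ) * f) =
      ∑ β ∈ f.support, (mfact (α + β) : ℝ) * ‖f.coeff β‖ ^ 2 := by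
  rw [apolarNormSq, support_monomial_one_mul, Finset.sum_map]
  simp only [addLeftEmbedding_apply, coeff_monomial_mul, one_mul]

lemma apolarNorm_le_apolarNorm_monomial_one_mul (α : Fin d →₀ ℕ) (f : MvPolynomial (Fin d) ℂ) :
    apolarNorm f ≤ apolarNorm (monomial α (1 : ℂ) * f) := by
  refine Real.sqrt_le_sqrt ?_
  rw [apolarNormSq, apolarNormSq_monomial_one_mul]
  gcongr with β
  exact_mod_cast mfact_le_mfact_add α β

lemma apolarNorm_monomial_one_mul_le {α : Fin d →₀ ℕ} {f : MvPolynomial (Fin d) ℂ} {c : ℝ}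
    (hc : 0 ≤ c) (h : ∀ β ∈ f.support, Real.sqrt ((mfact (α + β) : ℝ) / mfact β) ≤ c) :
    apolarNorm (monomial α (1 : ℂ) * f) ≤ c * apolarNorm f := by
  have hsq : apolarNormSq (monomial α (1 : ℂ) * f) ≤ c ^ 2 * apolarNormSq f := by
    rw [apolarNormSq_monomial_one_mul, apolarNormSq, Finset.mul_sum]
    refine Finset.sum_le_sum fun β hβ => ?_
    have hβ0 : (0 : ℝ) < mfact β := by exact_mod_cast mfact_pos β
    rw [← mul_assoc]
    gcongr
    rw [← div_le_iff₀ hβ0]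
    exact (Real.sqrt_le_left hc).mp (h β hβ)
  calc apolarNorm (monomial α (1 : ℂ) * f)
      ≤ Real.sqrt (c ^ 2 * apolarNormSq f) := Real.sqrt_le_sqrt hsq
    _ = c * apolarNorm f := by rw [Real.sqrt_mul (sq_nonneg c), Real.sqrt_sq hc, apolarNorm]

lemma apolarNorm_monomial_one (γ : Fin d →₀ ℕ) :
    apolarNorm (monomial γ (1 : ℂ)) = Real.sqrt (mfact γ) := by
  simp [apolarNorm, apolarNormSq, support_monomial]

lemma apolarNorm_monomial_one_pos (γ : Fin d →₀ ℕ) : 0 < apolarNorm (monomial γ (1 : ℂ)) := by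
  rw [apolarNorm_monomial_one]
  exact Real.sqrt_pos.2 (by exact_mod_cast mfact_pos γ)

lemma apolarNorm_monomial_one_mul_monomial_one (α β : Fin d →₀ ℕ) :
    apolarNorm (monomial α (1 : ℂ) * monomial β 1) =
      Real.sqrt ((mfact (α + β) : ℝ) / mfact β) * apolarNorm (monomial β (1 : ℂ)) := by
  rw [monomial_mul, one_mul, apolarNorm_monomial_one, apolarNorm_monomial_one,
    Real.sqrt_div (Nat.cast_nonneg _), div_mul_cancel₀ _ (Real.sqrt_pos.2 _).ne']
  exact_mod_cast mfact_pos β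

lemma isGreatest_sSup_of_sum_eq (hd : 0 < d) (m : ℕ) (g : (Fin d →₀ ℕ) → ℝ) :
    IsGreatest {x : ℝ | ∃ β : Fin d →₀ ℕ, (∑ i, β i) = m ∧ x = g β}
      (sSup {x : ℝ | ∃ β : Fin d →₀ ℕ, (∑ i, β i) = m ∧ x = g β}) := by
  set S := {x : ℝ | ∃ β : Fin d →₀ ℕ, (∑ i, β i) = m ∧ x = g β}
  have hne : S.Nonempty := ⟨_, Finsupp.single ⟨0, hd⟩ m, by simp, rfl⟩
  have hfin : S.Finite := by
    refine ((Finsupp.finite_of_degree_eq m).image g).subset ?_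
    rintro x ⟨β, hβ, rfl⟩
    exact ⟨β, by rwa [Set.mem_ofPred_eq, Finsupp.degree_eq_sum], rfl⟩
  exact ⟨hne.csSup_mem hfin, fun x hx => le_csSup hfin.bddAbove hx⟩

end ApolarNorm

/-- For any multi-index  and homogeneous  of degree :
 with
, and  is optimal. -/
theorem stmt2 {d : ℕ} (hd : 0 < d) (α : Fin d →₀ ℕ) (m : ℕ) (Cam : ℝ)
    (hC : Cam = sSup {x : ℝ | ∃ β : Fin d →₀ ℕ, (∑ i, β i) = m ∧
        x = Real.sqrt ((mfact (α + β) : ℝ) / (mfact β : ℝ))}) :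
    (∀ f : MvPolynomial (Fin d) ℂ, f.IsHomogeneous m →
      apolarNorm f ≤ apolarNorm (monomial α (1 : ℂ) * f) ∧
      apolarNorm (monomial α (1 : ℂ) * f) ≤ Cam * apolarNorm f) ∧
    (∀ C' : ℝ, (∀ f : MvPolynomial (Fin d) ℂ, f.IsHomogeneous m →
        apolarNorm (monomial α (1 : ℂ) * f) ≤ C' * apolarNorm f) → Cam ≤ C') := by
  obtain ⟨hCmem, hCub⟩ := hC ▸ isGreatest_sSup_of_sum_eq hd m
    fun β => Real.sqrt ((mfact (α + β) : ℝ) / (mfact β : ℝ))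
  refine ⟨fun f hf => ⟨apolarNorm_le_apolarNorm_monomial_one_mul α f, ?_⟩, fun C' hC' => ?_⟩
  · have hC0 : 0 ≤ Cam := by
      obtain ⟨β, -, rfl⟩ := hCmem
      exact Real.sqrt_nonneg _
    exact apolarNorm_monomial_one_mul_le hC0
      fun β hβ => hCub ⟨β, hf.sum_eq_of_mem_support hβ, rfl⟩
  · obtain ⟨β, hβ, rfl⟩ := hCmem
    have h := hC' _ (isHomogeneous_monomial_of_sum_eq hβ 1)
    rw [apolarNorm_monomial_one_mul_monomial_one] at h
    exact le_of_mul_le_mul_right h (apolarNorm_monomial_one_pos β)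
end

section
/- (Beauzamy-type bound) If P(z) = Σ_{|α|=k} c_α z^α is a homogeneous polynomial of degree k and f_m is a homogeneous polynomial of degree m on ℂ^d, then ‖P f_m‖_a ≤ ‖f_m‖_a (1+m)^{k/2} Σ_{|α|=k} |c_α| sqrt(α!). -/
open MvPolynomial Finset

/-! Expanding `P f = Σ c_α z^α f`, the triangle inequality reduces the bound to
`‖z^α f‖_a² ≤ α! (1+m)^k ‖f‖_a²`. Multiplication by `z^α` moves the coefficient of `z^β` to
`z^(α+β)`, and `(α+β)! ≤ α! β! (1+m)^|α|` because every `β_i ≤ m`; coordinatewise this is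
`(a+b)! ≤ a! b! (b+1)^a`. The triangle inequality itself holds because `√γ!`-weighted
coefficients embed the polynomials isometrically into a Euclidean space. -/

namespace Nat

theorem factorial_add_le_mul_pow (a b : ℕ) : (a + b)! ≤ a ! * b ! * (b + 1) ^ a := by
  induction a with
  | zero => simp
  | succ n ih =>
    calc (n + 1 + b)! = (n + b + 1) * (n + b)! := by
          rw [Nat.add_right_comm, Nat.factorial_succ]
      _ ≤ ((n + 1) * (b + 1)) * (n ! * b ! * (b + 1) ^ n) := by gcongr; nlinarith
      _ = (n + 1)! * b ! * (b + 1) ^ (n + 1) := by rw [Nat.factorial_succ, pow_succ]; ring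

end Nat

theorem mfact_add_le {d m : ℕ} (α β : Fin d →₀ ℕ) (hβ : ∀ i, β i ≤ m) :
    mfact (α + β) ≤ mfact α * mfact β * (m + 1) ^ α.degree := by
  simp only [mfact, Finsupp.add_apply, Finsupp.degree_eq_sum, ← prod_pow_eq_pow_sum,
    ← prod_mul_distrib]
  exact prod_le_prod' fun i _ =>
    (Nat.factorial_add_le_mul_pow _ _).trans (by gcongr; exact hβ i)

section ApolarNorm

variable {d : ℕ}

theorem apolarNormSq_eq_sum_of_support_subset {P : MvPolynomial (Fin d) ℂ}
    {S : Finset (Fin d →₀ ℕ)} (hS : P.support ⊆ S) :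
    apolarNormSq P = ∑ γ ∈ S, (mfact γ : ℝ) * ‖P.coeff γ‖ ^ 2 :=
  sum_subset hS fun γ _ hγ => by simp [notMem_support_iff.mp hγ]

noncomputable def apolarCoords (S : Finset (Fin d →₀ ℕ)) :
    MvPolynomial (Fin d) ℂ →ₗ[ℂ] EuclideanSpace ℂ S :=
  (WithLp.linearEquiv 2 ℂ (S → ℂ)).symm.toLinearMap ∘ₗ
    LinearMap.pi fun γ => (Real.sqrt (mfact γ.1) : ℂ) • lcoeff ℂ γ.1

theorem apolarNorm_eq_norm_apolarCoords {P : MvPolynomial (Fin d) ℂ}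
    {S : Finset (Fin d →₀ ℕ)} (hS : P.support ⊆ S) :
    apolarNorm P = ‖apolarCoords S P‖ := by
  rw [EuclideanSpace.norm_eq, apolarNorm, apolarNormSq_eq_sum_of_support_subset hS,
    ← sum_coe_sort S]
  congr 1
  refine sum_congr rfl fun γ _ => ?_
  simp [apolarCoords, mul_pow]

theorem apolarNorm_smul (c : ℂ) (P : MvPolynomial (Fin d) ℂ) :
    apolarNorm (c • P) = ‖c‖ * apolarNorm P := by
  rw [apolarNorm_eq_norm_apolarCoords (support_smul.trans subset_rfl),
    apolarNorm_eq_norm_apolarCoords subset_rfl, map_smul, norm_smul]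

theorem apolarNorm_sum_le {ι : Type*} (s : Finset ι) (g : ι → MvPolynomial (Fin d) ℂ) :
    apolarNorm (∑ i ∈ s, g i) ≤ ∑ i ∈ s, apolarNorm (g i) := by
  classical
  set S := (∑ i ∈ s, g i).support ∪ s.biUnion fun i => (g i).support
  rw [apolarNorm_eq_norm_apolarCoords (S := S) subset_union_left, map_sum]
  refine (norm_sum_le _ _).trans_eq (sum_congr rfl fun i hi => ?_)
  exact (apolarNorm_eq_norm_apolarCoords
    ((subset_biUnion_of_mem (fun i => (g i).support) hi).trans subset_union_right)).symm

theorem apolarNormSq_monomial_mul_le {m : ℕ} (α : Fin d →₀ ℕ) {f : MvPolynomial (Fin d) ℂ}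
    (hf : f.totalDegree ≤ m) :
    apolarNormSq (monomial α 1 * f) ≤ mfact α * (1 + m) ^ α.degree * apolarNormSq f := by
  have hsupp : (monomial α (1 : ℂ) * f).support = f.support.map (addLeftEmbedding α) :=
    AddMonoidAlgebra.support_coeff_single_mul f 1 (by simp) α
  rw [apolarNormSq, hsupp, sum_map, apolarNormSq, mul_sum]
  refine sum_le_sum fun β hβ => ?_
  rw [addLeftEmbedding_apply, coeff_monomial_mul, one_mul, ← mul_assoc]
  have hβm : ∀ i, β i ≤ m := fun i =>
    (le_degreeOf_of_mem_support i hβ).trans ((degreeOf_le_totalDegree f i).trans hf)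
  gcongr
  calc (mfact (α + β) : ℝ) ≤ ((mfact α * mfact β * (m + 1) ^ α.degree : ℕ) : ℝ) := by
        exact_mod_cast mfact_add_le α β hβm
    _ = mfact α * (1 + m) ^ α.degree * mfact β := by push_cast; ring

theorem apolarNorm_monomial_mul_le {m : ℕ} (α : Fin d →₀ ℕ) {f : MvPolynomial (Fin d) ℂ}
    (hf : f.totalDegree ≤ m) :
    apolarNorm (monomial α 1 * f) ≤ Real.sqrt (mfact α * (1 + m) ^ α.degree) * apolarNorm f := by
  rw [apolarNorm, apolarNorm, ← Real.sqrt_mul (by positivity)]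
  exact Real.sqrt_le_sqrt (apolarNormSq_monomial_mul_le α hf)

theorem apolarNorm_mul_le {k m : ℕ} {P f : MvPolynomial (Fin d) ℂ} (hP : P.totalDegree ≤ k)
    (hf : f.totalDegree ≤ m) :
    apolarNorm (P * f) ≤ apolarNorm f * Real.sqrt ((1 + m) ^ k) *
      ∑ α ∈ P.support, ‖P.coeff α‖ * Real.sqrt (mfact α) := by
  have hPf : P * f = ∑ α ∈ P.support, P.coeff α • (monomial α 1 * f) := by
    conv_lhs => rw [P.as_sum, sum_mul]
    simp only [← smul_mul_assoc, smul_monomial, smul_eq_mul, mul_one]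
  calc apolarNorm (P * f) ≤ ∑ α ∈ P.support, ‖P.coeff α‖ * apolarNorm (monomial α 1 * f) := by
        rw [hPf]
        exact (apolarNorm_sum_le _ _).trans_eq (sum_congr rfl fun α _ => apolarNorm_smul _ _)
    _ ≤ ∑ α ∈ P.support, ‖P.coeff α‖ * (Real.sqrt (mfact α * (1 + m) ^ k) * apolarNorm f) := by
        gcongr with α hα
        refine (apolarNorm_monomial_mul_le α hf).trans ?_
        gcongr
        · exact Real.sqrt_nonneg _
        · linarith
        · exact (le_totalDegree hα).trans hP
    _ = _ := by
        rw [mul_sum]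
        refine sum_congr rfl fun α _ => ?_
        rw [Real.sqrt_mul (by positivity)]
        ring

end ApolarNorm

/-- Beauzamy-type bound:
. -/
theorem stmt3 {d k m : ℕ} (P f : MvPolynomial (Fin d) ℂ)
    (hP : P.IsHomogeneous k) (hf : f.IsHomogeneous m) :
    apolarNorm (P * f) ≤ apolarNorm f * ((1 + m : ℝ) ^ ((k : ℝ) / 2)) *
      ∑ α ∈ P.support, ‖P.coeff α‖ * Real.sqrt (mfact α) := by
  have hsqrt : (1 + m : ℝ) ^ ((k : ℝ) / 2) = Real.sqrt ((1 + m) ^ k) := by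
    rw [Real.sqrt_eq_rpow, ← Real.rpow_natCast, ← Real.rpow_mul (by positivity),
      div_eq_mul_one_div]
  rw [hsqrt]
  exact apolarNorm_mul_le hP.totalDegree_le hf.totalDegree_le
end

section
/- (Bargmann's formula) For polynomials P and Q in d complex variables, ⟨P,Q⟩_a = π^{-d} ∫_{ℝ^d}∫_{ℝ^d} P(x+iy) conj(Q(x+iy)) e^{-|x|^2-|y|^2} dx dy, and in particular this integral is finite. -/
/-! Write `z = x + i y`. Expanding `P` and `Q` into monomials, the integrand becomes a
combination of the functions `z^α z̄^β e^{-|z|^2}`, which factor over the coordinates. In polar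
coordinates `z = r e^{iθ}` a one-variable factor `z^m z̄^n e^{-|z|^2} dx dy` becomes
`r^{m+n+1} e^{-r^2} e^{i(m-n)θ} dr dθ`; the same form gives integrability, the angular integral
vanishes unless `m = n`, and the radial one is `Γ(m+1)/2 = m!/2`. So the monomials are orthogonal
with `∫ |z^α|^2 e^{-|z|^2} = π^d α!`. -/

open MvPolynomial Finset

open MeasureTheory Set Complex
open scoped Real ComplexConjugate

theorem integrable_iff_integrableOn_polarCoord_target {E : Type*} [NormedAddCommGroup E]
    [NormedSpace ℝ E] (f : ℝ × ℝ → E) :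
    Integrable f ↔ IntegrableOn (fun p ↦ p.1 • f (polarCoord.symm p)) polarCoord.target := by
  rw [← integrableOn_univ, integrableOn_congr_set_ae polarCoord_source_ae_eq_univ.symm,
    ← polarCoord.symm_image_target_eq_source,
    integrableOn_image_iff_integrableOn_abs_det_fderiv_smul volume
      (measurableSet_Ioi.prod measurableSet_Ioo)
      (s := polarCoord.target) (fun p _ ↦ (hasFDerivAt_polarCoord_symm p).hasFDerivWithinAt)
      polarCoord.symm.injOn]
  simp_rw [det_fderivPolarCoordSymm]
  exact integrableOn_congr_fun (fun p hp ↦ by rw [abs_of_pos hp.1])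
    (measurableSet_Ioi.prod measurableSet_Ioo)

theorem integrableOn_Ioi_pow_mul_exp_neg_sq (k : ℕ) :
    IntegrableOn (fun r : ℝ ↦ (r : ℂ) ^ k * exp (-(r : ℂ) ^ 2)) (Ioi 0) := by
  have h := integrableOn_rpow_mul_exp_neg_mul_sq (b := 1) one_pos
    (s := k) (neg_one_lt_zero.trans_le k.cast_nonneg)
  simp_rw [Real.rpow_natCast, neg_one_mul] at h
  simpa [IntegrableOn] using h.ofReal (𝕜 := ℂ)

theorem integral_Ioi_pow_mul_exp_neg_sq (k : ℕ) :
    ∫ r in Ioi (0 : ℝ), (r : ℂ) ^ k * exp (-(r : ℂ) ^ 2) =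
      (Real.Gamma ((k + 1) / 2) / 2 : ℝ) := by
  have h := integral_rpow_mul_exp_neg_rpow (p := 2) (q := k) two_pos
    (neg_one_lt_zero.trans_le k.cast_nonneg)
  simp_rw [Real.rpow_natCast, Real.rpow_two] at h
  have h_ofReal : (fun r : ℝ ↦ (r : ℂ) ^ k * exp (-(r : ℂ) ^ 2)) =
      fun r ↦ ((r ^ k * Real.exp (-r ^ 2) : ℝ) : ℂ) := by
    ext r; push_cast; ring
  rw [h_ofReal, integral_complex_ofReal, h]
  push_cast
  ring

theorem integral_Ioo_exp_int_mul_I (k : ℤ) :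
    ∫ θ in Ioo (-π) π, exp (k * θ * I) = if k = 0 then (2 * π : ℂ) else 0 := by
  split_ifs with hk
  · simp [hk, measureReal_def, Real.volume_Ioo, Real.pi_pos.le, two_mul]
  have hc : (k : ℂ) * I ≠ 0 := mul_ne_zero (Int.cast_ne_zero.2 hk) I_ne_zero
  have h_period : exp (k * I * π) = exp (k * I * (-π : ℝ)) := by
    rw [show (k * I * π : ℂ) = k * I * (-π : ℝ) + k * (2 * π * I) by push_cast; ring,
      exp_add, exp_int_mul_two_pi_mul_I, mul_one]
  simp_rw [mul_right_comm (k : ℂ) _ I]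
  rw [← integral_Ioc_eq_integral_Ioo,
    ← intervalIntegral.integral_of_le (by linarith [Real.pi_pos]),
    integral_exp_mul_complex hc, h_period, sub_self, zero_div]

theorem integrableOn_Ioo_exp_int_mul_I (k : ℤ) :
    IntegrableOn (fun θ : ℝ ↦ exp (k * θ * I)) (Ioo (-π) π) :=
  (by fun_prop : Continuous fun θ : ℝ ↦ exp (k * θ * I)).integrableOn_Icc.mono_set
    Ioo_subset_Icc_self

noncomputable def gaussMonomial (m n : ℕ) (q : ℝ × ℝ) : ℂ :=
  (q.1 + q.2 * I) ^ m * conj (q.1 + q.2 * I : ℂ) ^ n * exp (-q.1 ^ 2 - q.2 ^ 2)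

theorem smul_gaussMonomial_polarCoord_symm (m n : ℕ) (p : ℝ × ℝ) :
    p.1 • gaussMonomial m n (polarCoord.symm p) =
      ((p.1 : ℂ) ^ (m + n + 1) * exp (-(p.1 : ℂ) ^ 2)) * exp (((m - n : ℤ) : ℂ) * p.2 * I) := by
  obtain ⟨r, θ⟩ := p
  have h_polar : ((r * Real.cos θ : ℝ) : ℂ) + (r * Real.sin θ : ℝ) * I = r * exp (θ * I) := by
    rw [exp_mul_I]; push_cast; ring
  have h_conj : conj (r * exp (θ * I)) = r * exp (-(θ * I)) := by
    rw [map_mul, conj_ofReal, ← exp_conj, map_mul, conj_ofReal, conj_I, mul_neg]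
  have h_norm_sq : -((r * Real.cos θ : ℝ) : ℂ) ^ 2 - ((r * Real.sin θ : ℝ) : ℂ) ^ 2 = -r ^ 2 := by
    have := congrArg ((↑) : ℝ → ℂ) (Real.cos_sq_add_sin_sq θ)
    push_cast at this ⊢
    linear_combination (-(r : ℂ) ^ 2) * this
  have h_phase : exp (θ * I) ^ m * exp (-(θ * I)) ^ n = exp (((m - n : ℤ) : ℂ) * θ * I) := by
    rw [← exp_nat_mul, ← exp_nat_mul, ← exp_add]
    push_cast
    ring_nf
  simp only [polarCoord_symm_apply, gaussMonomial, h_polar, h_conj, h_norm_sq, real_smul,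
    ← h_phase]
  ring

theorem volume_restrict_polarCoord_target :
    volume.restrict polarCoord.target =
      (volume.restrict (Ioi (0 : ℝ))).prod (volume.restrict (Ioo (-π) π)) := by
  rw [polarCoord_target, Measure.volume_eq_prod, Measure.prod_restrict]

theorem integrable_gaussMonomial (m n : ℕ) : Integrable (gaussMonomial m n) := by
  rw [integrable_iff_integrableOn_polarCoord_target, IntegrableOn,
    volume_restrict_polarCoord_target]
  simp_rw [smul_gaussMonomial_polarCoord_symm]
  exact (integrableOn_Ioi_pow_mul_exp_neg_sq _).mul_prod (integrableOn_Ioo_exp_int_mul_I _)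

theorem integral_gaussMonomial (m n : ℕ) :
    ∫ q, gaussMonomial m n q = if m = n then (π * m.factorial : ℂ) else 0 := by
  rw [← integral_comp_polarCoord_symm, volume_restrict_polarCoord_target]
  simp_rw [smul_gaussMonomial_polarCoord_symm]
  rw [integral_prod_mul (fun r : ℝ ↦ (r : ℂ) ^ (m + n + 1) * exp (-(r : ℂ) ^ 2))
      (fun θ : ℝ ↦ exp (((m - n : ℤ) : ℂ) * θ * I)),
    integral_Ioi_pow_mul_exp_neg_sq, integral_Ioo_exp_int_mul_I]
  split_ifs with h_int h_nat h_nat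
  · subst h_nat
    have : ((m + m + 1 : ℕ) + 1) / 2 = (m + 1 : ℝ) := by push_cast; ring
    rw [this, Real.Gamma_nat_eq_factorial]
    push_cast
    ring
  · omega
  · omega
  · rw [mul_zero]

theorem MvPolynomial.eval_eq_sum_of_support_subset {R σ : Type*} [CommSemiring R] [Fintype σ]
    {f : MvPolynomial σ R} {s : Finset (σ →₀ ℕ)} (h : f.support ⊆ s) (x : σ → R) :
    eval x f = ∑ d ∈ s, f.coeff d * ∏ i, x i ^ d i :=
  (eval_eq' x f).trans <| Finset.sum_subset h fun d _ hd ↦ by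
    rw [notMem_support_iff.1 hd, zero_mul]

section Bargmann

variable {ι : Type*} [Fintype ι]

noncomputable def gaussMonomialPi (α β : ι → ℕ) (p : (ι → ℝ) × (ι → ℝ)) : ℂ :=
  ∏ i, gaussMonomial (α i) (β i) (p.1 i, p.2 i)

theorem gaussMonomialPi_apply (α β : ι → ℕ) (p : (ι → ℝ) × (ι → ℝ)) :
    gaussMonomialPi α β p =
      (∏ i, ((p.1 i : ℂ) + p.2 i * I) ^ α i) * (∏ i, conj ((p.1 i : ℂ) + p.2 i * I) ^ β i) *
        exp (-(∑ i, (p.1 i : ℂ) ^ 2) - ∑ i, (p.2 i : ℂ) ^ 2) := by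
  simp only [gaussMonomialPi, gaussMonomial, Finset.prod_mul_distrib, ← exp_sum,
    Finset.sum_sub_distrib, Finset.sum_neg_distrib]

theorem integrable_gaussMonomialPi (α β : ι → ℕ) : Integrable (gaussMonomialPi α β) := by
  have h_pi : Integrable fun q : ι → ℝ × ℝ ↦ ∏ i, gaussMonomial (α i) (β i) (q i) :=
    Integrable.fintype_prod_dep fun i ↦ integrable_gaussMonomial (α i) (β i)
  exact ((volume_measurePreserving_arrowProdEquivProdArrow ℝ ℝ ι).integrable_comp_emb
    (MeasurableEquiv.measurableEmbedding _)).mp h_pi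

theorem integral_gaussMonomialPi (α β : ι → ℕ) :
    ∫ p, gaussMonomialPi α β p =
      if α = β then (π : ℂ) ^ Fintype.card ι * ∏ i, ((α i).factorial : ℂ) else 0 := by
  rw [← (volume_measurePreserving_arrowProdEquivProdArrow ℝ ℝ ι).integral_comp
    (MeasurableEquiv.measurableEmbedding _)]
  change ∫ q : ι → ℝ × ℝ, ∏ i, gaussMonomial (α i) (β i) (q i) = _
  rw [volume_pi, integral_fintype_prod_eq_prod]
  simp_rw [integral_gaussMonomial, Fintype.prod_ite_zero, funext_iff]
  rw [Finset.prod_mul_distrib, Finset.prod_const, Finset.card_univ]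

noncomputable def bargmannIntegrand (P Q : MvPolynomial ι ℂ) (p : (ι → ℝ) × (ι → ℝ)) : ℂ :=
  eval (fun i ↦ (p.1 i : ℂ) + (p.2 i : ℂ) * I) P *
    conj (eval (fun i ↦ (p.1 i : ℂ) + (p.2 i : ℂ) * I) Q) *
    exp (-(∑ i, (p.1 i : ℂ) ^ 2) - ∑ i, (p.2 i : ℂ) ^ 2)

theorem bargmannIntegrand_eq_sum {P Q : MvPolynomial ι ℂ} {s t : Finset (ι →₀ ℕ)}
    (hP : P.support ⊆ s) (hQ : Q.support ⊆ t) :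
    bargmannIntegrand P Q =
      fun p ↦ ∑ α ∈ s, ∑ β ∈ t, P.coeff α * conj (Q.coeff β) * gaussMonomialPi α β p := by
  ext p
  simp only [bargmannIntegrand, eval_eq_sum_of_support_subset hP,
    eval_eq_sum_of_support_subset hQ, map_sum, map_mul, map_prod, map_pow, gaussMonomialPi_apply,
    Finset.sum_mul, Finset.mul_sum]
  rw [Finset.sum_comm]
  refine Finset.sum_congr rfl fun α _ ↦ Finset.sum_congr rfl fun β _ ↦ ?_
  ring

theorem integrable_bargmannIntegrand (P Q : MvPolynomial ι ℂ) :
    Integrable (bargmannIntegrand P Q) := by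
  rw [bargmannIntegrand_eq_sum subset_rfl subset_rfl]
  exact integrable_finsetSum _ fun α _ ↦ integrable_finsetSum _ fun β _ ↦
    (integrable_gaussMonomialPi α β).const_mul _

theorem integral_bargmannIntegrand {P Q : MvPolynomial ι ℂ} {s : Finset (ι →₀ ℕ)}
    (hP : P.support ⊆ s) (hQ : Q.support ⊆ s) :
    ∫ p, bargmannIntegrand P Q p = (π : ℂ) ^ Fintype.card ι *
      ∑ α ∈ s, (∏ i, ((α i).factorial : ℂ)) * P.coeff α * conj (Q.coeff α) := by
  have h_int (α β : ι →₀ ℕ) :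
      Integrable fun p ↦ P.coeff α * conj (Q.coeff β) * gaussMonomialPi α β p :=
    (integrable_gaussMonomialPi α β).const_mul _
  simp only [bargmannIntegrand_eq_sum hP hQ]
  rw [integral_finsetSum _ fun α _ ↦ integrable_finsetSum _ fun β _ ↦ h_int α β]
  simp_rw [integral_finsetSum _ fun β _ ↦ h_int _ β, integral_const_mul, integral_gaussMonomialPi,
    DFunLike.coe_fn_eq, mul_ite, mul_zero, Finset.sum_ite_eq, Finset.sum_ite_mem, Finset.inter_self,
    Finset.mul_sum]
  refine Finset.sum_congr rfl fun α _ ↦ ?_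
  ring

end Bargmann

open MeasureTheory in
/-- Bargmann's formula: the apolar inner product equals a Gaussian integral
over C^d identified with R^d x R^d, and the integrand is integrable. -/
theorem stmt6 {d : ℕ} (P Q : MvPolynomial (Fin d) ℂ) :
    Integrable (fun p : (Fin d → ℝ) × (Fin d → ℝ) =>
      MvPolynomial.eval (fun i => (p.1 i : ℂ) + (p.2 i : ℂ) * Complex.I) P *
        (starRingEnd ℂ) (MvPolynomial.eval (fun i => (p.1 i : ℂ) + (p.2 i : ℂ) * Complex.I) Q) *
        Complex.exp (-(∑ i, (p.1 i : ℂ) ^ 2) - ∑ i, (p.2 i : ℂ) ^ 2)) ∧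
    apolar P Q = (Real.pi : ℂ) ^ (-(d : ℤ)) *
      ∫ p : (Fin d → ℝ) × (Fin d → ℝ),
        MvPolynomial.eval (fun i => (p.1 i : ℂ) + (p.2 i : ℂ) * Complex.I) P *
          (starRingEnd ℂ) (MvPolynomial.eval (fun i => (p.1 i : ℂ) + (p.2 i : ℂ) * Complex.I) Q) *
          Complex.exp (-(∑ i, (p.1 i : ℂ) ^ 2) - ∑ i, (p.2 i : ℂ) ^ 2) := by
  refine ⟨integrable_bargmannIntegrand P Q, ?_⟩
  have h_pi : (π : ℂ) ^ (-(d : ℤ)) * (π : ℂ) ^ d = 1 := by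
    rw [zpow_neg, zpow_natCast, inv_mul_cancel₀ (pow_ne_zero _ (ofReal_ne_zero.2 Real.pi_ne_zero))]
  change _ = _ * ∫ p, bargmannIntegrand P Q p
  rw [integral_bargmannIntegrand Finset.subset_union_left Finset.subset_union_right,
    Fintype.card_fin, ← mul_assoc, h_pi, one_mul]
  simp only [apolar, mfact, Nat.cast_prod]
end

section
/- Let a_1,...,a_M ∈ ℂ^d and set σ_k(z) = ⟨z, conj(a_k)⟩ = a_{k,1}z_1+···+a_{k,d}z_d. Suppose there exists c ∈ ℂ^d \ {0} with Σ_j conj(a_{k,j}) c_j = 0 for all k. Then for every univariate polynomial g, ‖σ_1···σ_M · g(⟨z, conj(c)⟩)‖_a^2 = ‖σ_1···σ_M‖_a^2 · ‖g(⟨z, conj(c)⟩)‖_a^2. -/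
open MvPolynomial Finset

/-!
Multiplication by `L = ⟨z, c̄⟩` is adjoint, for the apolar product, to the derivation
`D = ∑ c̄ⱼ ∂ⱼ`. The orthogonality hypothesis says that `D` kills every `σₖ`, hence their product
`P`, while `D L = ‖c‖²` is constant. Moving the powers of `L` across the product therefore gives
`⟨P Lᵐ, P Lⁿ⟩ₐ = δₘₙ n! ‖c‖²ⁿ ‖P‖ₐ²`, so `‖P g(L)‖ₐ² = (∑ᵢ |gᵢ|² i! ‖c‖²ⁱ) ‖P‖ₐ²`, and the
case `P = 1` identifies the bracket with `‖g(L)‖ₐ²`.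
-/

section DerivationPower

variable {R A : Type*} [CommRing R] [CommRing A] [Algebra R A] {D : Derivation R A A}
  {P L : A} {s : R}

theorem Derivation.iterate_apply_mul_pow (hP : D P = 0) (hL : D L = algebraMap R A s) (n m : ℕ) :
    D^[n] (P * L ^ m) = ((m.descFactorial n : R) * s ^ n) • (P * L ^ (m - n)) := by
  induction n with
  | zero => simp
  | succ n ih =>
    rw [Function.iterate_succ_apply', ih, D.map_smul, D.leibniz, D.leibniz_pow, hP, hL,
      smul_zero, add_zero, Nat.descFactorial_succ, Nat.sub_add_eq]
    simp only [smul_eq_mul, nsmul_eq_mul]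
    simp only [Algebra.smul_def, map_mul, map_pow]
    push_cast
    ring

end DerivationPower

section SesquilinearForm

variable {𝕜 A : Type*} [RCLike 𝕜] [CommRing A] [Algebra 𝕜 A] {B : A →ₗ[𝕜] A →ₗ⋆[𝕜] 𝕜}
  {D : Derivation 𝕜 A A} {L P : A} {s : ℝ}

theorem sesqForm_pow_mul_left (hadj : ∀ R S, B (L * R) S = B R (D S)) (m : ℕ) (R S : A) :
    B (L ^ m * R) S = B R (D^[m] S) := by
  induction m generalizing S with
  | zero => simp
  | succ m ih => rw [pow_succ', mul_assoc, hadj, ih, Function.iterate_succ_apply]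

theorem sesqForm_mul_pow_mul_pow (hB : ∀ x y, starRingEnd 𝕜 (B x y) = B y x)
    (hadj : ∀ R S, B (L * R) S = B R (D S)) (hP : D P = 0) (hL : D L = algebraMap 𝕜 A s)
    (m n : ℕ) :
    B (P * L ^ m) (P * L ^ n) = if m = n then ((n.factorial * s ^ n : ℝ) : 𝕜) * B P P else 0 := by
  have hiter := Derivation.iterate_apply_mul_pow hP hL
  rw [mul_comm P, sesqForm_pow_mul_left hadj, hiter, map_smulₛₗ]
  rcases lt_trichotomy m n with hmn | rfl | hmn
  · obtain ⟨k, rfl⟩ := Nat.exists_eq_add_of_lt hmn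
    have hvanish : B P (P * L ^ (k + 1)) = 0 := by
      rw [← hB, mul_comm, sesqForm_pow_mul_left hadj, Function.iterate_succ_apply, hP,
        Function.iterate_fixed D.map_zero, map_zero, map_zero]
    simp [hmn.ne, show m + k + 1 - m = k + 1 by omega, hvanish]
  · simp [Nat.descFactorial_self]
  · simp [hmn.ne', Nat.descFactorial_eq_zero_iff_lt.mpr hmn]

theorem sesqForm_mul_aeval_self (hB : ∀ x y, starRingEnd 𝕜 (B x y) = B y x)
    (hadj : ∀ R S, B (L * R) S = B R (D S)) (hP : D P = 0) (hL : D L = algebraMap 𝕜 A s)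
    (g : Polynomial 𝕜) :
    B (P * Polynomial.aeval L g) (P * Polynomial.aeval L g) =
      ((∑ i ∈ range (g.natDegree + 1), ‖g.coeff i‖ ^ 2 * i.factorial * s ^ i : ℝ) : 𝕜) * B P P := by
  simp only [Polynomial.aeval_eq_sum_range, mul_sum, mul_smul_comm, map_sum, map_smul,
    LinearMap.sum_apply, LinearMap.smul_apply, map_smulₛₗ, sesqForm_mul_pow_mul_pow hB hadj hP hL]
  simp only [smul_ite, smul_zero, sum_ite_eq', mem_range, sum_mul]
  refine sum_congr rfl fun i hi => ?_
  rw [if_pos (mem_range.mp hi), smul_eq_mul, smul_eq_mul, ← mul_assoc, ← mul_assoc, RCLike.conj_mul]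
  simp only [RCLike.algebraMap_eq_ofReal]
  push_cast
  ring

theorem sesqForm_mul_aeval_mul_sesqForm_one (hB : ∀ x y, starRingEnd 𝕜 (B x y) = B y x)
    (hadj : ∀ R S, B (L * R) S = B R (D S)) (hP : D P = 0) (hL : D L = algebraMap 𝕜 A s)
    (g : Polynomial 𝕜) :
    B (P * Polynomial.aeval L g) (P * Polynomial.aeval L g) * B 1 1 =
      B P P * B (Polynomial.aeval L g) (Polynomial.aeval L g) := by
  have hone := sesqForm_mul_aeval_self hB hadj D.map_one_eq_zero hL g
  rw [one_mul] at hone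
  rw [sesqForm_mul_aeval_self hB hadj hP hL, hone]
  ring

end SesquilinearForm

theorem Derivation.sum_apply {ι R A M : Type*} [CommSemiring R] [CommSemiring A] [Algebra R A]
    [AddCommMonoid M] [Module A M] [Module R M] (s : Finset ι) (D : ι → Derivation R A M) (a : A) :
    (∑ i ∈ s, D i) a = ∑ i ∈ s, D i a := by
  have h := map_sum Derivation.coeFnAddMonoidHom D s
  simpa only [Derivation.coeFnAddMonoidHom_apply, Finset.sum_apply] using congrFun h a

theorem MvPolynomial.sum_smul_pderiv_apply_sum_C_mul_X {σ R : Type*} [Fintype σ] [CommRing R]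
    (v b : σ → R) :
    (∑ j, v j • pderiv j : Derivation R (MvPolynomial σ R) (MvPolynomial σ R))
        (∑ i, C (b i) * X i) = C (∑ j, v j * b j) := by
  classical
  simp [Derivation.sum_apply, pderiv_X, Pi.single_apply, smul_eq_C_mul, mul_comm]

section Apolar

variable {d : ℕ}

theorem apolar_eq_sum_of_support_subset {P : MvPolynomial (Fin d) ℂ} (Q : MvPolynomial (Fin d) ℂ)
    {t : Finset (Fin d →₀ ℕ)} (ht : P.support ⊆ t) :
    apolar P Q = ∑ α ∈ t, (mfact α : ℂ) * P.coeff α * starRingEnd ℂ (Q.coeff α) := by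
  have hvanish : ∀ α ∉ P.support, (mfact α : ℂ) * P.coeff α * starRingEnd ℂ (Q.coeff α) = 0 :=
    fun α hα => by simp [notMem_support_iff.mp hα]
  rw [apolar, ← sum_subset subset_union_left fun α _ => hvanish α,
    sum_subset ht fun α _ => hvanish α]

noncomputable def apolarForm :
    MvPolynomial (Fin d) ℂ →ₗ[ℂ] MvPolynomial (Fin d) ℂ →ₗ⋆[ℂ] ℂ :=
  LinearMap.mk₂'ₛₗ (RingHom.id ℂ) (starRingEnd ℂ) apolar
    (fun P P' Q => by
      rw [apolar_eq_sum_of_support_subset Q support_add,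
        apolar_eq_sum_of_support_subset Q subset_union_left,
        apolar_eq_sum_of_support_subset Q subset_union_right, ← sum_add_distrib]
      simp only [coeff_add, mul_add, add_mul])
    (fun a P Q => by
      rw [apolar_eq_sum_of_support_subset Q support_smul,
        apolar_eq_sum_of_support_subset Q subset_rfl, smul_eq_mul, mul_sum]
      simp only [coeff_smul, smul_eq_mul, RingHom.id_apply]
      exact sum_congr rfl fun _ _ => by ring)
    (fun P Q Q' => by
      simp only [apolar_eq_sum_of_support_subset _ (subset_refl P.support), coeff_add, map_add,
        mul_add, sum_add_distrib])
    (fun a P Q => by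
      simp only [apolar_eq_sum_of_support_subset _ (subset_refl P.support), coeff_smul,
        smul_eq_mul, map_mul, mul_sum]
      exact sum_congr rfl fun _ _ => by ring)

theorem apolarForm_apply (P Q : MvPolynomial (Fin d) ℂ) : apolarForm P Q = apolar P Q := rfl

theorem conj_apolarForm (P Q : MvPolynomial (Fin d) ℂ) :
    starRingEnd ℂ (apolarForm P Q) = apolarForm Q P := by
  rw [apolarForm_apply, apolarForm_apply,
    apolar_eq_sum_of_support_subset Q (t := P.support ∪ Q.support) subset_union_left,
    apolar_eq_sum_of_support_subset P (t := P.support ∪ Q.support) subset_union_right, map_sum]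
  simp only [map_mul, map_natCast, Complex.conj_conj]
  exact sum_congr rfl fun _ _ => by ring

theorem apolar_monomial_left (α : Fin d →₀ ℕ) (b : ℂ) (Q : MvPolynomial (Fin d) ℂ) :
    apolar (monomial α b) Q = mfact α * b * starRingEnd ℂ (Q.coeff α) := by
  rw [apolar_eq_sum_of_support_subset Q support_monomial_subset, sum_singleton, coeff_monomial,
    if_pos rfl]

theorem mfact_add_single (β : Fin d →₀ ℕ) (j : Fin d) :
    mfact (β + Finsupp.single j 1) = mfact β * (β j + 1) := by
  have hfactor : ∀ i, ((β + Finsupp.single j 1 : Fin d →₀ ℕ) i).factorial =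
      (β i).factorial * if i = j then β j + 1 else 1 := by
    intro i
    by_cases hij : i = j
    · subst hij; simp [Nat.factorial_succ, mul_comm]
    · simp [hij]
  simp only [mfact, hfactor, prod_mul_distrib, prod_ite_eq', mem_univ, if_true]

theorem apolarForm_X_mul (j : Fin d) (R S : MvPolynomial (Fin d) ℂ) :
    apolarForm (X j * R) S = apolarForm R (pderiv j S) := by
  suffices h : apolarForm.comp (LinearMap.mulLeft ℂ (X j)) =
      apolarForm.compl₂ (pderiv j).toLinearMap from LinearMap.congr_fun₂ h R S
  refine LinearMap.ext_basis (basisMonomials _ ℂ) (basisMonomials _ ℂ) fun β γ => ?_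
  simp only [coe_basisMonomials, LinearMap.comp_apply, LinearMap.compl₂_apply,
    LinearMap.mulLeft_apply, Derivation.coeFn_coe, apolarForm_apply, pderiv_monomial,
    apolar_monomial_left, coeff_monomial]
  rw [X, monomial_mul, one_mul, add_comm, apolar_monomial_left, coeff_monomial]
  by_cases hγ : γ = β + Finsupp.single j 1
  · subst hγ
    simp [mfact_add_single]
  rw [if_neg hγ]
  by_cases hγj : γ j = 0
  · simp [hγj]
  have hshift : γ - Finsupp.single j 1 ≠ β := fun h => hγ <| by
    rw [← h, tsub_add_cancel_of_le (Finsupp.single_le_iff.mpr (Nat.one_le_iff_ne_zero.mpr hγj))]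
  simp [hshift]

theorem apolarForm_sum_C_mul_X_mul (c : Fin d → ℂ) (R S : MvPolynomial (Fin d) ℂ) :
    apolarForm ((∑ j, C (c j) * X j) * R) S =
      apolarForm R ((∑ j, starRingEnd ℂ (c j) • pderiv j : Derivation ℂ _ _) S) := by
  simp only [sum_mul, ← smul_eq_C_mul, smul_mul_assoc, map_sum, map_smul,
    LinearMap.sum_apply, LinearMap.smul_apply, apolarForm_X_mul, Derivation.sum_apply,
    Derivation.smul_apply, map_smulₛₗ, Complex.conj_conj, smul_eq_mul]

theorem apolarForm_one_one : apolarForm (1 : MvPolynomial (Fin d) ℂ) 1 = 1 := by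
  simp [apolarForm_apply, ← C_1, ← monomial_zero', apolar_monomial_left, mfact]

theorem ofReal_apolarNormSq (P : MvPolynomial (Fin d) ℂ) :
    (apolarNormSq P : ℂ) = apolarForm P P := by
  rw [apolarForm_apply, apolar_eq_sum_of_support_subset P subset_rfl, apolarNormSq]
  push_cast
  refine sum_congr rfl fun α _ => ?_
  rw [mul_assoc, Complex.mul_conj, Complex.normSq_eq_norm_sq]
  push_cast
  ring

end Apolar

theorem stmt8_general {d M : ℕ} (a : Fin M → Fin d → ℂ) (c : Fin d → ℂ)
    (horth : ∀ k : Fin M, ∑ j, (starRingEnd ℂ) (a k j) * c j = 0) (g : Polynomial ℂ) :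
    apolarNormSq ((∏ k, ∑ j, MvPolynomial.C (a k j) * MvPolynomial.X j) *
        Polynomial.eval₂ (MvPolynomial.C : ℂ →+* MvPolynomial (Fin d) ℂ)
          (∑ j, MvPolynomial.C (c j) * MvPolynomial.X j) g)
      = apolarNormSq (∏ k, ∑ j, MvPolynomial.C (a k j) * MvPolynomial.X j) *
        apolarNormSq (Polynomial.eval₂ (MvPolynomial.C : ℂ →+* MvPolynomial (Fin d) ℂ)
          (∑ j, MvPolynomial.C (c j) * MvPolynomial.X j) g) := by
  set D : Derivation ℂ (MvPolynomial (Fin d) ℂ) _ := ∑ j, starRingEnd ℂ (c j) • pderiv j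
  have hP : D (∏ k, ∑ j, C (a k j) * X j) = 0 := by
    refine prod_induction _ (fun p => D p = 0) (fun p q hp hq => by simp [hp, hq]) D.map_one_eq_zero
      fun k _ => ?_
    rw [sum_smul_pderiv_apply_sum_C_mul_X, ← map_zero C, ← map_zero (starRingEnd ℂ), ← horth k]
    simp [mul_comm]
  have hL : D (∑ j, C (c j) * X j) = algebraMap ℂ _ ((∑ j, ‖c j‖ ^ 2 : ℝ) : ℂ) := by
    rw [sum_smul_pderiv_apply_sum_C_mul_X, algebraMap_eq]
    push_cast
    simp [Complex.conj_mul']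
  have key := sesqForm_mul_aeval_mul_sesqForm_one conj_apolarForm
    (apolarForm_sum_C_mul_X_mul c) hP hL g
  rw [apolarForm_one_one, mul_one, Polynomial.aeval_def, algebraMap_eq] at key
  simp only [← ofReal_apolarNormSq] at key
  exact_mod_cast key

/-- If a nonzero vector c is orthogonal to the (conjugated) coefficient vectors of
the linear forms sigma_k, then multiplication of their product by any univariate
polynomial in the linear form determined by c is multiplicative for the apolar norm. -/
theorem stmt8 {d M : ℕ} (a : Fin M → Fin d → ℂ) (c : Fin d → ℂ) (hc : c ≠ 0)
    (horth : ∀ k : Fin M, ∑ j, (starRingEnd ℂ) (a k j) * c j = 0) (g : Polynomial ℂ) :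
    apolarNormSq ((∏ k, ∑ j, MvPolynomial.C (a k j) * MvPolynomial.X j) *
        Polynomial.eval₂ (MvPolynomial.C : ℂ →+* MvPolynomial (Fin d) ℂ)
          (∑ j, MvPolynomial.C (c j) * MvPolynomial.X j) g)
      = apolarNormSq (∏ k, ∑ j, MvPolynomial.C (a k j) * MvPolynomial.X j) *
        apolarNormSq (Polynomial.eval₂ (MvPolynomial.C : ℂ →+* MvPolynomial (Fin d) ℂ)
          (∑ j, MvPolynomial.C (c j) * MvPolynomial.X j) g) :=
  stmt8_general a c horth g
end

section
/- Let P(z_1,z_2) = a z_1^2 + b z_1 z_2 + c z_2^2 be a nonzero polynomial with complex coefficients and suppose 4ac ≠ b^2. Then P satisfies the Khavinson–Shapiro bounds: there is a constant C > 0 such that for every m ≥ 1 and every homogeneous polynomial f_m of degree m in two variables, ‖P f_m‖_a ≥ C m^{1/2} ‖f_m‖_a. -/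
open MvPolynomial Finset

open Complex ComplexConjugate
open scoped Nat

/-!
Factor `P = ℓ₁ ℓ₂` into linearly independent linear forms. For the apolar inner product the
adjoint of multiplication by `ℓ = α z₁ + β z₂` is `ℓ*(D) = ᾱ ∂₁ + β̄ ∂₂`, and
`ℓ*(D) ℓ = ℓ ℓ*(D) + ‖ℓ‖²`, whence `‖ℓ f‖² = ‖ℓ‖² ‖f‖² + ‖ℓ*(D) f‖²`. Applied twice,
`‖ℓ₁ ℓ₂ f‖² = ‖ℓ₁‖² ‖ℓ₂‖² ‖f‖² + ‖ℓ₁‖² ‖ℓ₂*(D) f‖² + ‖ℓ₁*(D)(ℓ₂ f)‖²`, and by the commutation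
relation the last term is `‖⟨ℓ₂, ℓ₁⟩ f + ℓ₂ ℓ₁*(D) f‖² ≳ ‖ℓ₁*(D) f‖² - O(‖f‖²)`. Independence of
`ℓ₁, ℓ₂` bounds `‖ℓ₁*(D) f‖² + ‖ℓ₂*(D) f‖²` below by a multiple of
`‖∂₁ f‖² + ‖∂₂ f‖² = m ‖f‖²`.
-/

/- A binary form `∑ₖ F k z₁ ^ k z₂ ^ (n - k)` of degree `n` is handled through its coefficient
sequence `F : ℕ → ℂ`; `wNormSq n F` is its squared apolar norm. -/
namespace BinaryForm

def weight (n k : ℕ) : ℕ := k ! * (n - k)!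

lemma weight_succ_succ (n k : ℕ) : weight (n + 1) (k + 1) = (k + 1) * weight n k := by
  simp only [weight, Nat.add_sub_add_right, Nat.factorial_succ]; ring

lemma weight_succ_left {n k : ℕ} (hk : k ≤ n) : weight (n + 1) k = (n + 1 - k) * weight n k := by
  rw [weight, weight, Nat.sub_add_comm hk, Nat.factorial_succ]; ring

def wInner (n : ℕ) (f g : ℕ → ℂ) : ℂ :=
  ∑ k ∈ range (n + 1), (weight n k : ℂ) * f k * conj (g k)

def wNormSq (n : ℕ) (f : ℕ → ℂ) : ℝ :=
  ∑ k ∈ range (n + 1), (weight n k : ℝ) * normSq (f k)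

def VanishesAbove (n : ℕ) (f : ℕ → ℂ) : Prop := ∀ k, n < k → f k = 0

def shift (f : ℕ → ℂ) : ℕ → ℂ
  | 0 => 0
  | k + 1 => f k

/-- Multiplication by `α z₁ + β z₂`. -/
def mulLin (α β : ℂ) (f : ℕ → ℂ) (k : ℕ) : ℂ := α * shift f k + β * f k

/-- `ᾱ ∂₁ + β̄ ∂₂` on forms of degree `n`. -/
def derivLin (n : ℕ) (α β : ℂ) (f : ℕ → ℂ) (k : ℕ) : ℂ :=
  conj α * (k + 1) * f (k + 1) + conj β * (n - k : ℕ) * f k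

lemma wNormSq_nonneg (n : ℕ) (f : ℕ → ℂ) : 0 ≤ wNormSq n f :=
  sum_nonneg fun _ _ => mul_nonneg (Nat.cast_nonneg _) (normSq_nonneg _)

lemma wInner_self (n : ℕ) (f : ℕ → ℂ) : wInner n f f = wNormSq n f := by
  simp only [wInner, wNormSq, mul_assoc, mul_conj, ofReal_sum, ofReal_mul, ofReal_natCast]

lemma conj_wInner (n : ℕ) (f g : ℕ → ℂ) : conj (wInner n f g) = wInner n g f := by
  simp only [wInner, map_sum, map_mul, conj_conj, map_natCast]
  exact sum_congr rfl fun _ _ => by ring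

lemma wNormSq_congr {n : ℕ} {f g : ℕ → ℂ} (h : ∀ k ≤ n, f k = g k) :
    wNormSq n f = wNormSq n g :=
  sum_congr rfl fun k hk => by rw [h k (Nat.lt_succ_iff.mp (mem_range.mp hk))]

lemma wNormSq_const_mul (n : ℕ) (t : ℂ) (f : ℕ → ℂ) :
    wNormSq n (fun k => t * f k) = normSq t * wNormSq n f := by
  simp only [wNormSq, normSq_mul, mul_sum]
  exact sum_congr rfl fun _ _ => by ring

lemma normSq_sub_le (z w : ℂ) : normSq (z - w) ≤ 2 * normSq z + 2 * normSq w := by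
  have := normSq_nonneg (z + w)
  rw [normSq_add] at this
  rw [normSq_sub]
  linarith

lemma wNormSq_sub_le (n : ℕ) (f g : ℕ → ℂ) :
    wNormSq n (fun k => f k - g k) ≤ 2 * wNormSq n f + 2 * wNormSq n g := by
  simp only [wNormSq, mul_sum, ← sum_add_distrib]
  refine sum_le_sum fun k _ => ?_
  nlinarith [normSq_sub_le (f k) (g k), (Nat.cast_nonneg _ : (0:ℝ) ≤ weight n k)]

lemma VanishesAbove.mulLin {n : ℕ} {f : ℕ → ℂ} (hf : VanishesAbove n f) (α β : ℂ) :
    VanishesAbove (n + 1) (mulLin α β f) := by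
  rintro (_ | k) hk
  · omega
  · simp [BinaryForm.mulLin, shift, hf k (by omega), hf (k + 1) (by omega)]

lemma VanishesAbove.derivLin {n : ℕ} {f : ℕ → ℂ} (hf : VanishesAbove (n + 1) f) (α β : ℂ) :
    VanishesAbove n (derivLin (n + 1) α β f) := by
  intro k hk
  simp [BinaryForm.derivLin, hf (k + 1) (by omega), Nat.sub_eq_zero_of_le (by omega : n + 1 ≤ k)]

lemma wInner_mulLin {n : ℕ} {f : ℕ → ℂ} (hf : VanishesAbove n f) (α β : ℂ) (g : ℕ → ℂ) :
    wInner (n + 1) (mulLin α β f) g = wInner n f (derivLin (n + 1) α β g) := by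
  calc wInner (n + 1) (mulLin α β f) g
      = ∑ k ∈ range (n + 1 + 1), (weight (n + 1) k : ℂ) * α * shift f k * conj (g k)
        + ∑ k ∈ range (n + 1 + 1), (weight (n + 1) k : ℂ) * β * f k * conj (g k) := by
        rw [wInner, ← sum_add_distrib]
        exact sum_congr rfl fun _ _ => by rw [mulLin]; ring
    _ = ∑ k ∈ range (n + 1), (weight n k : ℂ) * f k * (α * (k + 1) * conj (g (k + 1)))
        + ∑ k ∈ range (n + 1), (weight n k : ℂ) * f k * (β * (n + 1 - k : ℕ) * conj (g k)) := by
        rw [sum_range_succ', sum_range_succ _ (n + 1), hf (n + 1) (by omega)]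
        simp only [shift, mul_zero, zero_mul, add_zero]
        congr 1 <;> refine sum_congr rfl fun k hk => ?_
        · rw [weight_succ_succ]; push_cast; ring
        · rw [weight_succ_left (Nat.lt_succ_iff.mp (mem_range.mp hk))]; push_cast; ring
    _ = wInner n f (derivLin (n + 1) α β g) := by
        rw [wInner, ← sum_add_distrib]
        refine sum_congr rfl fun k _ => ?_
        simp only [derivLin, map_add, map_mul, conj_conj, map_natCast, map_one]
        ring

lemma derivLin_mulLin {n k : ℕ} (hk : k ≤ n) (α₁ β₁ α₂ β₂ : ℂ) (f : ℕ → ℂ) :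
    derivLin (n + 1) α₁ β₁ (mulLin α₂ β₂ f) k
      = (conj α₁ * α₂ + conj β₁ * β₂) * f k + mulLin α₂ β₂ (derivLin n α₁ β₁ f) k := by
  obtain ⟨d, rfl⟩ := Nat.exists_eq_add_of_le hk
  cases k with
  | zero => simp [derivLin, mulLin, shift]; ring
  | succ k =>
    simp only [derivLin, mulLin, shift, show k + 1 + d + 1 - (k + 1) = d + 1 by omega,
      show k + 1 + d - k = d + 1 by omega, show k + 1 + d - (k + 1) = d by omega]
    push_cast; ring

/-- Adjointness (`wInner_mulLin`) plus the commutation relation `ℓ*(D) ℓ = ℓ ℓ*(D) + ‖ℓ‖²`. -/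
lemma wNormSq_mulLin {n : ℕ} {f : ℕ → ℂ} (hf : VanishesAbove n f) (α β : ℂ) :
    wNormSq (n + 1) (mulLin α β f)
      = (normSq α + normSq β) * wNormSq n f + wNormSq (n - 1) (derivLin n α β f) := by
  cases n with
  | zero =>
    simp [wNormSq, weight, mulLin, derivLin, shift, hf 1 one_pos, sum_range_succ, normSq_mul]
    ring
  | succ n =>
    have hcomm : ∀ k ≤ n + 1, derivLin (n + 1 + 1) α β (mulLin α β f) k
        = (normSq α + normSq β : ℝ) * f k + mulLin α β (derivLin (n + 1) α β f) k := by
      intro k hk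
      rw [derivLin_mulLin hk, mul_comm (conj α), mul_comm (conj β), mul_conj, mul_conj]
      push_cast; ring
    have hsplit : wInner (n + 1) f (derivLin (n + 1 + 1) α β (mulLin α β f))
        = (normSq α + normSq β : ℝ) * wInner (n + 1) f f
          + wInner (n + 1) f (mulLin α β (derivLin (n + 1) α β f)) := by
      simp only [wInner, mul_sum, ← sum_add_distrib]
      refine sum_congr rfl fun k hk => ?_
      rw [hcomm k (Nat.lt_succ_iff.mp (mem_range.mp hk)), map_add, map_mul, conj_ofReal]
      ring
    have hadj : wInner (n + 1) f (mulLin α β (derivLin (n + 1) α β f))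
        = wNormSq n (derivLin (n + 1) α β f) := by
      rw [← conj_wInner, wInner_mulLin (hf.derivLin α β), conj_wInner, wInner_self]
    apply ofReal_injective
    rw [← wInner_self, wInner_mulLin hf, hsplit, hadj, wInner_self, Nat.add_sub_cancel]
    push_cast; ring

lemma le_wNormSq_mulLin {n : ℕ} {f : ℕ → ℂ} (hf : VanishesAbove n f) (α β : ℂ) :
    (normSq α + normSq β) * wNormSq n f ≤ wNormSq (n + 1) (mulLin α β f) := by
  rw [wNormSq_mulLin hf]
  linarith [wNormSq_nonneg (n - 1) (derivLin n α β f)]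

lemma normSq_mul_add_mul_le (p q x y : ℂ) :
    normSq (p * x + q * y) ≤ (normSq p + normSq q) * (normSq x + normSq y) := by
  have lagrange : (normSq p + normSq q) * (normSq x + normSq y)
      = normSq (p * x + q * y) + normSq (p * conj y - q * conj x) := by
    simp only [normSq_apply, add_re, add_im, mul_re, mul_im, sub_re, sub_im, conj_re, conj_im]
    ring
  linarith [normSq_nonneg (p * conj y - q * conj x)]

/-- Cramer's rule `det • (x, y) = adj A (A (x, y))`, combined with Cauchy–Schwarz. -/
lemma normSq_det_mul_le (p q r s x y : ℂ) :
    normSq (p * s - q * r) * (normSq x + normSq y)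
      ≤ (normSq p + normSq q + normSq r + normSq s)
        * (normSq (p * x + q * y) + normSq (r * x + s * y)) := by
  have hx := normSq_mul_add_mul_le s (-q) (p * x + q * y) (r * x + s * y)
  have hy := normSq_mul_add_mul_le (-r) p (p * x + q * y) (r * x + s * y)
  rw [show s * (p * x + q * y) + -q * (r * x + s * y) = (p * s - q * r) * x by ring,
    normSq_mul, normSq_neg] at hx
  rw [show -r * (p * x + q * y) + p * (r * x + s * y) = (p * s - q * r) * y by ring,
    normSq_mul, normSq_neg] at hy
  linarith

/-- Euler's identity `‖∂₁ f‖² + ‖∂₂ f‖² = (n + 1) ‖f‖²` in degree `n + 1`. -/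
lemma wNormSq_partial_add (n : ℕ) (f : ℕ → ℂ) :
    wNormSq n (fun k => (k + 1) * f (k + 1)) + wNormSq n (fun k => (n + 1 - k : ℕ) * f k)
      = (n + 1) * wNormSq (n + 1) f := by
  have h₁ : wNormSq n (fun k => (k + 1) * f (k + 1))
      = ∑ k ∈ range (n + 1 + 1), (k : ℝ) * weight (n + 1) k * normSq (f k) := by
    rw [sum_range_succ', wNormSq]
    simp only [CharP.cast_eq_zero, zero_mul, add_zero]
    refine sum_congr rfl fun k _ => ?_
    rw [weight_succ_succ, normSq_mul]
    push_cast
    rw [show ((k : ℂ) + 1) = ((k + 1 : ℝ) : ℂ) by push_cast; ring, normSq_ofReal]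
    ring
  have h₂ : wNormSq n (fun k => (n + 1 - k : ℕ) * f k)
      = ∑ k ∈ range (n + 1 + 1), ((n + 1 - k : ℕ) : ℝ) * weight (n + 1) k * normSq (f k) := by
    rw [sum_range_succ, wNormSq, Nat.sub_self, Nat.cast_zero, zero_mul, zero_mul, add_zero]
    refine sum_congr rfl fun k hk => ?_
    rw [weight_succ_left (Nat.lt_succ_iff.mp (mem_range.mp hk)), normSq_mul, normSq_natCast]
    push_cast
    ring
  rw [h₁, h₂, ← sum_add_distrib, wNormSq, mul_sum]
  refine sum_congr rfl fun k hk => ?_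
  rw [Nat.cast_sub (Nat.lt_succ_iff.mp (mem_range.mp hk))]
  push_cast
  ring

lemma normSq_det_mul_wNormSq_le (n : ℕ) (f : ℕ → ℂ) (α₁ β₁ α₂ β₂ : ℂ) :
    normSq (α₁ * β₂ - β₁ * α₂) * ((n + 1) * wNormSq (n + 1) f)
      ≤ (normSq α₁ + normSq β₁ + normSq α₂ + normSq β₂)
        * (wNormSq n (derivLin (n + 1) α₁ β₁ f) + wNormSq n (derivLin (n + 1) α₂ β₂ f)) := by
  rw [← wNormSq_partial_add]
  simp only [wNormSq, ← sum_add_distrib, mul_sum]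
  refine sum_le_sum fun k _ => ?_
  have h := normSq_det_mul_le (conj α₁) (conj β₁) (conj α₂) (conj β₂)
    ((k + 1) * f (k + 1)) ((n + 1 - k : ℕ) * f k)
  simp only [← map_mul, ← map_sub, normSq_conj] at h
  simp only [derivLin, mul_assoc]
  nlinarith [(Nat.cast_nonneg _ : (0:ℝ) ≤ weight n k)]

/- With `x, y, D, N` standing for `‖ℓ₁*(D) f‖², ‖ℓ₂*(D) f‖², ‖ℓ₁*(D)(ℓ₂ f)‖², ‖f‖²` and
`τ = |⟨ℓ₂, ℓ₁⟩|²`. -/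
lemma mul_add_le_of_mul_le {L₁ L₂ τ N x y D : ℝ} (hL₁ : 0 < L₁) (hL₂ : 0 < L₂) (hτ : 0 ≤ τ)
    (hN : 0 ≤ N) (hy : 0 ≤ y) (hD : 0 ≤ D) (hx : L₂ * x ≤ 2 * D + 2 * τ * N) :
    L₁ * L₂ ^ 2 / (2 * (L₂ * (L₁ + L₂) + τ)) * (x + y) ≤ L₁ * (L₂ * N + y) + D := by
  rw [div_mul_eq_mul_div, div_le_iff₀ (by positivity)]
  nlinarith [mul_le_mul_of_nonneg_left hx (mul_pos hL₁ hL₂).le, mul_pos hL₁ hL₂,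
    mul_nonneg (mul_nonneg hL₁.le hL₂.le) hN, mul_nonneg hL₁.le hy, mul_nonneg hτ hD,
    mul_nonneg (mul_nonneg hL₁.le hτ) hy, mul_nonneg (mul_nonneg hL₂.le hL₂.le) hD,
    mul_nonneg (mul_nonneg hL₂.le hL₁.le) hD, mul_nonneg (mul_nonneg hL₂.le hL₂.le) hy,
    mul_nonneg (mul_nonneg (mul_nonneg hL₁.le hL₂.le) hτ) hN]

lemma normSq_add_normSq_pos {α β : ℂ} (h : ¬(α = 0 ∧ β = 0)) : 0 < normSq α + normSq β := by
  rcases not_and_or.mp h with h | h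
  · linarith [normSq_pos.mpr h, normSq_nonneg β]
  · linarith [normSq_pos.mpr h, normSq_nonneg α]

theorem exists_pos_mul_le_wNormSq_mulLin_mulLin {α₁ β₁ α₂ β₂ : ℂ}
    (hdet : α₁ * β₂ - β₁ * α₂ ≠ 0) :
    ∃ K > 0, ∀ n f, VanishesAbove (n + 1) f →
      K * ((n + 1) * wNormSq (n + 1) f) ≤ wNormSq (n + 3) (mulLin α₁ β₁ (mulLin α₂ β₂ f)) := by
  set L₁ := normSq α₁ + normSq β₁
  set L₂ := normSq α₂ + normSq β₂
  set t := conj α₁ * α₂ + conj β₁ * β₂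
  have hL₁ : 0 < L₁ := normSq_add_normSq_pos fun h => hdet (by simp [h.1, h.2])
  have hL₂ : 0 < L₂ := normSq_add_normSq_pos fun h => hdet (by simp [h.1, h.2])
  have hE : 0 < normSq (α₁ * β₂ - β₁ * α₂) := normSq_pos.mpr hdet
  set μ := L₁ * L₂ ^ 2 / (2 * (L₂ * (L₁ + L₂) + normSq t))
  have hμ : 0 < μ := div_pos (by positivity)
    (by nlinarith [mul_pos hL₂ (add_pos hL₁ hL₂), normSq_nonneg t])
  refine ⟨normSq (α₁ * β₂ - β₁ * α₂) / (L₁ + L₂) * μ, by positivity, fun n f hf => ?_⟩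
  set N := wNormSq (n + 1) f
  set D := wNormSq (n + 1) (derivLin (n + 2) α₁ β₁ (mulLin α₂ β₂ f))
  have hPf : wNormSq (n + 3) (mulLin α₁ β₁ (mulLin α₂ β₂ f))
      = L₁ * (L₂ * N + wNormSq n (derivLin (n + 1) α₂ β₂ f)) + D := by
    rw [wNormSq_mulLin (hf.mulLin α₂ β₂), wNormSq_mulLin hf]
    rfl
  have hx : L₂ * wNormSq n (derivLin (n + 1) α₁ β₁ f) ≤ 2 * D + 2 * normSq t * N :=
    calc L₂ * wNormSq n (derivLin (n + 1) α₁ β₁ f)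
        ≤ wNormSq (n + 1) (mulLin α₂ β₂ (derivLin (n + 1) α₁ β₁ f)) :=
          le_wNormSq_mulLin (hf.derivLin α₁ β₁) α₂ β₂
      _ = wNormSq (n + 1) (fun k => derivLin (n + 2) α₁ β₁ (mulLin α₂ β₂ f) k - t * f k) :=
          wNormSq_congr fun k hk => by rw [derivLin_mulLin hk]; ring
      _ ≤ 2 * D + 2 * wNormSq (n + 1) (fun k => t * f k) := wNormSq_sub_le _ _ _
      _ = 2 * D + 2 * normSq t * N := by rw [wNormSq_const_mul]; ring
  have hEuler := normSq_det_mul_wNormSq_le n f α₁ β₁ α₂ β₂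
  rw [hPf, mul_comm _ μ, mul_assoc]
  refine le_trans (mul_le_mul_of_nonneg_left ?_ hμ.le)
    (mul_add_le_of_mul_le hL₁ hL₂ (normSq_nonneg t) (wNormSq_nonneg _ _) (wNormSq_nonneg _ _)
      (wNormSq_nonneg _ _) hx)
  rw [div_mul_eq_mul_div, div_le_iff₀ (add_pos hL₁ hL₂)]
  linarith

noncomputable def biexp (k j : ℕ) : Fin 2 →₀ ℕ := Finsupp.single 0 k + Finsupp.single 1 j

@[simp] lemma biexp_apply_zero (k j : ℕ) : biexp k j 0 = k := by simp [biexp]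

@[simp] lemma biexp_apply_one (k j : ℕ) : biexp k j 1 = j := by simp [biexp]

lemma degree_biexp (k j : ℕ) : (biexp k j).degree = k + j := by
  simp [Finsupp.degree_eq_sum]

lemma biexp_eta (d : Fin 2 →₀ ℕ) : biexp (d 0) (d 1) = d := by
  ext i; fin_cases i <;> simp

lemma biexp_succ_sub_single_zero (k j : ℕ) :
    biexp (k + 1) j - Finsupp.single 0 1 = biexp k j := by
  ext i; fin_cases i <;> simp

lemma biexp_succ_sub_single_one (k j : ℕ) :
    biexp k (j + 1) - Finsupp.single 1 1 = biexp k j := by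
  ext i; fin_cases i <;> simp

noncomputable def coeffSeq (n : ℕ) (f : MvPolynomial (Fin 2) ℂ) (k : ℕ) : ℂ :=
  f.coeff (biexp k (n - k))

lemma coeffSeq_vanishesAbove {n : ℕ} {f : MvPolynomial (Fin 2) ℂ} (hf : f.IsHomogeneous n) :
    VanishesAbove n (coeffSeq n f) :=
  fun k hk => hf.coeff_eq_zero (by rw [degree_biexp]; omega)

lemma apolarNormSq_eq_wNormSq {n : ℕ} {f : MvPolynomial (Fin 2) ℂ} (hf : f.IsHomogeneous n) :
    apolarNormSq f = wNormSq n (coeffSeq n f) := by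
  have hsupp : f.support ⊆ (range (n + 1)).image fun k => biexp k (n - k) := by
    intro d hd
    have hdeg : d 0 + d 1 = n := by
      by_contra hne
      refine mem_support_iff.mp hd (hf.coeff_eq_zero ?_)
      rwa [← biexp_eta d, degree_biexp]
    exact mem_image.mpr ⟨d 0, mem_range.mpr (by omega), by rw [← hdeg, Nat.add_sub_cancel_left,
      biexp_eta]⟩
  rw [apolarNormSq, sum_subset hsupp fun d _ hd => by simp [notMem_support_iff.mp hd],
    sum_image fun k _ l _ hkl => by simpa using congr_arg (· 0) hkl]
  refine sum_congr rfl fun k _ => ?_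
  simp [mfact, Fin.prod_univ_two, weight, coeffSeq, Complex.sq_norm]

noncomputable def linForm (α β : ℂ) : MvPolynomial (Fin 2) ℂ := C α * X 0 + C β * X 1

lemma _root_.MvPolynomial.IsHomogeneous.linForm_mul {n : ℕ} {f : MvPolynomial (Fin 2) ℂ}
    (hf : f.IsHomogeneous n) (α β : ℂ) : (linForm α β * f).IsHomogeneous (n + 1) := by
  rw [add_comm]
  exact ((isHomogeneous_C_mul_X α 0).add (isHomogeneous_C_mul_X β 1)).mul hf

lemma coeffSeq_linForm_mul {n : ℕ} {f : MvPolynomial (Fin 2) ℂ} (hf : f.IsHomogeneous n)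
    (α β : ℂ) : coeffSeq (n + 1) (linForm α β * f) = mulLin α β (coeffSeq n f) := by
  ext k
  simp only [coeffSeq, linForm, mulLin, add_mul, coeff_add, mul_assoc, coeff_C_mul,
    coeff_X_mul', Finsupp.mem_support_iff, biexp_apply_zero, biexp_apply_one]
  cases k with
  | zero => simp [shift, biexp_succ_sub_single_one]
  | succ k =>
    rw [Nat.add_sub_add_right]
    rcases Nat.lt_or_ge k n with hkn | hkn
    · obtain ⟨j, hj⟩ : ∃ j, n - k = j + 1 := ⟨n - k - 1, by omega⟩
      simp [shift, coeffSeq, hj, show n - (k + 1) = j by omega, biexp_succ_sub_single_zero,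
        biexp_succ_sub_single_one]
    · have hvan : coeffSeq n f (k + 1) = 0 := coeffSeq_vanishesAbove hf (k + 1) (by omega)
      rw [coeffSeq] at hvan
      simp [shift, coeffSeq, show n - k = 0 by omega, biexp_succ_sub_single_zero, hvan]

lemma exists_linForm_factorization {a b c : ℂ} (h : 4 * a * c ≠ b ^ 2) :
    ∃ α₁ β₁ α₂ β₂ : ℂ, α₁ * β₂ - β₁ * α₂ ≠ 0 ∧
      C a * X 0 ^ 2 + C b * X 0 * X 1 + C c * X 1 ^ 2 = linForm α₁ β₁ * linForm α₂ β₂ := by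
  suffices ∃ α₁ β₁ α₂ β₂ : ℂ, α₁ * β₂ - β₁ * α₂ ≠ 0 ∧
      a = α₁ * α₂ ∧ b = α₁ * β₂ + β₁ * α₂ ∧ c = β₁ * β₂ by
    obtain ⟨α₁, β₁, α₂, β₂, hdet, rfl, rfl, rfl⟩ := this
    exact ⟨α₁, β₁, α₂, β₂, hdet, by simp only [linForm, map_mul, map_add]; ring⟩
  by_cases ha : a = 0
  · subst ha
    refine ⟨0, 1, b, c, fun hb => h ?_, by ring, by ring, by ring⟩
    linear_combination b * hb
  · obtain ⟨s, hs⟩ := IsAlgClosed.exists_pow_nat_eq (b ^ 2 - 4 * a * c) two_pos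
    refine ⟨a, (b - s) / 2, 1, (b + s) / (2 * a), fun hs0 => h ?_, by ring, by field_simp; ring,
      by field_simp; linear_combination hs⟩
    have : s = 0 := by field_simp at hs0; linear_combination hs0 / 2
    linear_combination (-s) * this + hs

end BinaryForm

open BinaryForm

theorem stmt10_general (a b c : ℂ) (h : 4 * a * c ≠ b ^ 2) :
    ∃ K : ℝ, 0 < K ∧ ∀ m : ℕ, 1 ≤ m → ∀ f : MvPolynomial (Fin 2) ℂ, f.IsHomogeneous m →
      K * Real.sqrt m * apolarNorm f ≤
        apolarNorm ((C a * X (0 : Fin 2) ^ 2 + C b * X (0 : Fin 2) * X 1 + C c * X 1 ^ 2) * f) := by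
  obtain ⟨α₁, β₁, α₂, β₂, hdet, hP⟩ := exists_linForm_factorization h
  obtain ⟨K, hK, hbound⟩ := exists_pos_mul_le_wNormSq_mulLin_mulLin hdet
  refine ⟨√K, Real.sqrt_pos.mpr hK, fun m hm f hf => ?_⟩
  obtain ⟨n, rfl⟩ : ∃ n, m = n + 1 := ⟨m - 1, by omega⟩
  rw [apolarNorm, apolarNorm, hP, mul_assoc (linForm α₁ β₁),
    apolarNormSq_eq_wNormSq ((hf.linForm_mul α₂ β₂).linForm_mul α₁ β₁),
    coeffSeq_linForm_mul (hf.linForm_mul α₂ β₂), coeffSeq_linForm_mul hf,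
    apolarNormSq_eq_wNormSq hf, ← Real.sqrt_mul hK.le, ← Real.sqrt_mul (by positivity)]
  exact Real.sqrt_le_sqrt (by simpa [mul_assoc] using hbound n _ (coeffSeq_vanishesAbove hf))

/-- If P = a z1^2 + b z1 z2 + c z2^2 is nonzero and 4ac ≠ b^2, then P satisfies
the Khavinson-Shapiro bounds. -/
theorem stmt10 (a b c : ℂ) (h0 : ¬(a = 0 ∧ b = 0 ∧ c = 0)) (h : 4 * a * c ≠ b ^ 2) :
    ∃ K : ℝ, 0 < K ∧ ∀ m : ℕ, 1 ≤ m → ∀ f : MvPolynomial (Fin 2) ℂ, f.IsHomogeneous m →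
      K * Real.sqrt m * apolarNorm f ≤
        apolarNorm ((C a * X (0 : Fin 2) ^ 2 + C b * X (0 : Fin 2) * X 1 + C c * X 1 ^ 2) * f) :=
  stmt10_general a b c h
end

section
/- For complex numbers a, b, c, the quantity B := (4|a|^2+|b|^2)(|b|^2+4|c|^2) - 4|conj(a)b + conj(b)c|^2 equals (4x-u)^2 + (4y+v)^2, where b^2 = u+iv and conj(a)conj(c) = x+iy. In particular B ≥ 0, and B = 0 if and only if 4ac = b^2. -/
/-!
The quantity `B` is `‖4ac - b²‖²`: expanding `‖āb + b̄c‖²` produces the cross term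
`2 Re(ā c̄ b²)`, which is exactly the cross term of `‖4ac - b²‖²`. The right-hand side of the
identity is the same squared norm, written in the components of the conjugate `4āc̄ - conj(b²)`.
-/

open MvPolynomial Finset

open ComplexConjugate

theorem Complex.sq_norm_ofReal_mul_mul_sub_sq (k : ℝ) (a b c : ℂ) :
    ‖k * a * c - b ^ 2‖ ^ 2
      = (k * ‖a‖ ^ 2 + ‖b‖ ^ 2) * (‖b‖ ^ 2 + k * ‖c‖ ^ 2) - k * ‖conj a * b + conj b * c‖ ^ 2 := by
  simp only [Complex.sq_norm, Complex.normSq_apply, Complex.mul_re, Complex.mul_im,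
    Complex.add_re, Complex.add_im, Complex.sub_re, Complex.sub_im, Complex.conj_re,
    Complex.conj_im, Complex.ofReal_re, Complex.ofReal_im, sq b]
  ring

/-- B = (4|a|^2+|b|^2)(|b|^2+4|c|^2) - 4|conj(a)b + conj(b)c|^2 equals
(4x-u)^2 + (4y+v)^2 with b^2 = u+iv, conj(a)conj(c) = x+iy; in particular B ≥ 0
and B = 0 iff 4ac = b^2. -/
theorem stmt12 (a b c : ℂ) (B : ℝ)
    (hB : B = (4 * ‖a‖ ^ 2 + ‖b‖ ^ 2) *
          (‖b‖ ^ 2 + 4 * ‖c‖ ^ 2)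
        - 4 * ‖(starRingEnd ℂ) a * b + (starRingEnd ℂ) b * c‖ ^ 2) :
    B = (4 * ((starRingEnd ℂ) a * (starRingEnd ℂ) c).re - (b ^ 2).re) ^ 2
        + (4 * ((starRingEnd ℂ) a * (starRingEnd ℂ) c).im + (b ^ 2).im) ^ 2 ∧
    0 ≤ B ∧ (B = 0 ↔ 4 * a * c = b ^ 2) := by
  have hB' : B = ‖4 * a * c - b ^ 2‖ ^ 2 := by
    have h := Complex.sq_norm_ofReal_mul_mul_sub_sq 4 a b c
    push_cast at h
    rw [hB, h]
  refine ⟨?_, hB' ▸ by positivity, ?_⟩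
  · rw [hB', Complex.sq_norm, Complex.normSq_apply, ← map_mul, Complex.conj_re, Complex.conj_im]
    simp only [Complex.sub_re, Complex.sub_im, mul_assoc, Complex.mul_re, Complex.mul_im,
      Complex.re_ofNat, Complex.im_ofNat]
    ring
  · rw [hB', sq_eq_zero_iff, norm_eq_zero, sub_eq_zero]
end

section
/- (Fischer pair in dimension 1) Let P: ℂ → ℂ be a nonzero polynomial of degree k with leading homogeneous part P_k. Then for every entire function f: ℂ → ℂ there exist unique entire functions q and r with f = P·q + r and P_k*(D) r = 0; moreover r is a polynomial of degree at most k-1 (the Hermite interpolant of f at the zeros of P), and if f has order ρ then q also has order ρ. -/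
/-!
Peeling off one linear factor: `f = f a + (z - a) • dslope f a` with `dslope f a` again entire,
so induction over the linear factors of `P` gives `f = P q + R` with `deg R < deg P`; the same
induction gives uniqueness, because `P q + R = 0` forces `R a = 0` at every root `a` of `P`.
An entire function with vanishing `k`-th derivative is, by its Taylor expansion, a polynomial of
degree `< k`. For the orders: for large `|z|` one has `c ≤ |P z|` and `|P z|, |R z| ≤ C |z| ^ m`,
so the maximum moduli of `q` and `f` bound each other up to factors `t ^ m`. Such factors change
`log log M(t)` only by `O(1) + log log t = o(log t)`, and the order of an entire function is `≥ 0`.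
-/

noncomputable def growthOrder (f : ℂ → ℂ) : EReal :=
  Filter.limsup
    (fun r : ℝ =>
      ((Real.log (Real.log (sSup {x : ℝ | ∃ z : ℂ, ‖z‖ = r ∧ x = ‖f z‖}))
          / Real.log r : ℝ) : EReal))
    Filter.atTop

open Filter Set Metric Bornology Topology Polynomial

namespace Polynomial

section IsAlgClosed

variable {K : Type*} [Field K] [IsAlgClosed K]

@[elab_as_elim]
theorem induction_on_X_sub_C_mul {M : (P : K[X]) → P ≠ 0 → Prop}
    (const : ∀ c (hc : c ≠ 0), M (C c) (C_ne_zero.2 hc))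
    (X_sub_C_mul : ∀ a Q (hQ : Q ≠ 0), M Q hQ →
      M ((X - C a) * Q) (mul_ne_zero (X_sub_C_ne_zero a) hQ))
    (P : K[X]) (hP : P ≠ 0) : M P hP := by
  induction hn : P.natDegree generalizing P with
  | zero =>
    have hc : P.coeff 0 ≠ 0 := by rwa [eq_C_of_natDegree_eq_zero hn, Ne, C_eq_zero] at hP
    convert const _ hc
    exact eq_C_of_natDegree_eq_zero hn
  | succ n ih =>
    obtain ⟨a, ha⟩ := IsAlgClosed.exists_root P
      (by rw [degree_eq_natDegree hP, hn]; exact_mod_cast n.succ_ne_zero)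
    have hPQ := mul_divByMonic_eq_iff_isRoot.2 ha
    have hQ : P /ₘ (X - C a) ≠ 0 := right_ne_zero_of_mul (hPQ ▸ hP)
    have hQn : (P /ₘ (X - C a)).natDegree = n := by
      rw [← hPQ, natDegree_mul (X_sub_C_ne_zero a) hQ, natDegree_X_sub_C] at hn
      omega
    convert X_sub_C_mul a _ hQ (ih _ hQ hQn)
    exact hPQ.symm

end IsAlgClosed

theorem iteratedDeriv_eval {𝕜 : Type*} [NontriviallyNormedField 𝕜] (R : 𝕜[X]) (k : ℕ) :
    iteratedDeriv k (fun z => R.eval z) = fun z => (derivative^[k] R).eval z := by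
  induction k generalizing R with
  | zero => rfl
  | succ k ih =>
    have hderiv : deriv (fun z => R.eval z) = fun z => R.derivative.eval z := by
      ext z
      exact R.deriv
    rw [iteratedDeriv_succ', hderiv, ih, Function.iterate_succ_apply]

theorem iteratedDeriv_eval_eq_zero {𝕜 : Type*} [NontriviallyNormedField 𝕜] {R : 𝕜[X]}
    {k : ℕ} (h : R.degree < k) : iteratedDeriv k (fun z => R.eval z) = 0 := by
  rw [iteratedDeriv_eval, iterate_derivative_eq_zero_of_degree_lt h]
  ext z
  exact eval_zero

theorem exists_eventually_norm_eval_le_mul_pow {𝕜 : Type*} [NormedField 𝕜] (P : 𝕜[X]) {n : ℕ}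
    (hn : P.natDegree ≤ n) : ∃ C, 0 ≤ C ∧ ∀ᶠ z in cobounded 𝕜, ‖P.eval z‖ ≤ C * ‖z‖ ^ n := by
  refine ⟨∑ i ∈ Finset.range (n + 1), ‖P.coeff i‖, Finset.sum_nonneg fun _ _ => norm_nonneg _,
    (tendsto_norm_cobounded_atTop.eventually_ge_atTop 1).mono fun z hz => ?_⟩
  rw [eval_eq_sum_range' (Nat.lt_succ_of_le hn), Finset.sum_mul]
  refine (norm_sum_le _ _).trans (Finset.sum_le_sum fun i hi => ?_)
  rw [norm_mul, norm_pow]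
  gcongr
  exact Nat.lt_succ_iff.1 (Finset.mem_range.1 hi)

theorem exists_pos_eventually_le_norm_eval {𝕜 : Type*} [NormedField 𝕜] {P : 𝕜[X]}
    (hP : P ≠ 0) : ∃ c > 0, ∀ᶠ z in cobounded 𝕜, c ≤ ‖P.eval z‖ := by
  rcases lt_or_ge 0 P.degree with hdeg | hdeg
  · exact ⟨1, one_pos,
      (P.tendsto_norm_atTop hdeg tendsto_norm_cobounded_atTop).eventually_ge_atTop 1⟩
  · rw [eq_C_of_degree_le_zero hdeg] at hP ⊢
    exact ⟨_, norm_pos_iff.2 (C_ne_zero.1 hP), Eventually.of_forall fun z => by simp⟩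

end Polynomial

theorem iteratedDeriv_eq_zero_of_le {𝕜 F : Type*} [NontriviallyNormedField 𝕜] [NormedAddCommGroup F]
    [NormedSpace 𝕜 F] {f : 𝕜 → F} {k n : ℕ} (h : iteratedDeriv k f = 0) (hn : k ≤ n) :
    iteratedDeriv n f = 0 := by
  obtain ⟨j, rfl⟩ := Nat.exists_eq_add_of_le hn
  rw [iteratedDeriv_eq_iterate, add_comm, Function.iterate_add_apply,
    ← iteratedDeriv_eq_iterate (n := k), h]
  exact Function.iterate_fixed deriv_zero j

theorem Differentiable.exists_eq_eval_mul_add {f : ℂ → ℂ} (hf : Differentiable ℂ f) {P : ℂ[X]}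
    (hP : P ≠ 0) : ∃ (q : ℂ → ℂ) (R : ℂ[X]),
      Differentiable ℂ q ∧ R.degree < P.degree ∧ ∀ z, f z = P.eval z * q z + R.eval z := by
  induction P, hP using induction_on_X_sub_C_mul generalizing f with
  | const c hc =>
    refine ⟨fun z => f z / c, 0, hf.div_const c, by simp [degree_C hc], fun z => ?_⟩
    simp [mul_div_cancel₀ _ hc]
  | X_sub_C_mul a Q hQ ih =>
    have hdslope : Differentiable ℂ (dslope f a) := differentiableOn_univ.1 <|
      (Complex.differentiableOn_dslope univ_mem).2 hf.differentiableOn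
    obtain ⟨q, R, hq, hR, hfq⟩ := ih hdslope
    refine ⟨q, C (f a) + (X - C a) * R, hq, ?_, fun z => ?_⟩
    · rw [degree_mul, degree_X_sub_C]
      refine (degree_add_le _ _).trans_lt (max_lt ?_ ?_)
      · refine degree_C_le.trans_lt ?_
        rw [degree_eq_natDegree hQ]
        exact_mod_cast (by omega : 0 < 1 + Q.natDegree)
      · rw [degree_mul, degree_X_sub_C]
        exact WithBot.add_lt_add_left WithBot.one_ne_bot hR
    · have := sub_smul_dslope f a z
      simp only [eval_add, eval_mul, eval_sub, eval_X, eval_C, smul_eq_mul, hfq] at this ⊢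
      linear_combination -this

theorem eq_zero_of_eval_mul_add_eq_zero {P : ℂ[X]} (hP : P ≠ 0) {q : ℂ → ℂ} (hq : Continuous q)
    {R : ℂ[X]} (hR : R.degree < P.degree) (h : ∀ z, P.eval z * q z + R.eval z = 0) :
    q = 0 ∧ R = 0 := by
  induction P, hP using induction_on_X_sub_C_mul generalizing R with
  | const c hc =>
    have hR0 : R = 0 := by
      rw [degree_C hc] at hR
      exact degree_eq_bot.1 (Nat.WithBot.lt_zero_iff.1 hR)
    refine ⟨funext fun z => ?_, hR0⟩
    simpa [hR0, hc] using h z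
  | X_sub_C_mul a Q hQ ih =>
    have hRa : R.IsRoot a := by simpa using h a
    rw [← mul_divByMonic_eq_iff_isRoot.2 hRa] at h hR ⊢
    rw [degree_mul, degree_mul, degree_X_sub_C,
      WithBot.add_lt_add_iff_left WithBot.one_ne_bot] at hR
    have hcont : Continuous fun z => Q.eval z * q z + (R /ₘ (X - C a)).eval z :=
      (Q.continuous.mul hq).add (R /ₘ (X - C a)).continuous
    have hzero : (fun z => Q.eval z * q z + (R /ₘ (X - C a)).eval z) = 0 := by
      refine Continuous.ext_on (dense_compl_singleton a) hcont continuous_const fun z hz => ?_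
      have hza : z - a ≠ 0 := sub_ne_zero.2 hz
      have := h z
      simp only [eval_mul, eval_sub, eval_X, eval_C] at this
      exact (mul_eq_zero.1 (by linear_combination this)).resolve_left hza
    obtain ⟨rfl, hR1⟩ := ih hR (congrFun hzero)
    exact ⟨rfl, by rw [hR1, mul_zero]⟩

theorem Differentiable.exists_polynomial_of_iteratedDeriv_eq_zero {r : ℂ → ℂ}
    (hr : Differentiable ℂ r) {k : ℕ} (h : iteratedDeriv k r = 0) :
    ∃ R : ℂ[X], R.degree < k ∧ ∀ z, r z = R.eval z := by
  refine ⟨∑ n ∈ Finset.range k, C ((n.factorial : ℂ)⁻¹ * iteratedDeriv n r 0) * X ^ n, ?_,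
    fun z => ?_⟩
  · refine mem_degreeLT.1 (Submodule.sum_mem _ fun n hn => mem_degreeLT.2 ?_)
    exact (degree_C_mul_X_pow_le _ _).trans_lt (by exact_mod_cast Finset.mem_range.1 hn)
  · rw [← Complex.taylorSeries_eq_of_entire' 0 z hr, tsum_eq_sum (s := Finset.range k),
      eval_finsetSum]
    · simp
    · intro n hn
      simp [iteratedDeriv_eq_zero_of_le h (not_lt.1 (Finset.mem_range.not.1 hn))]

theorem limsup_div_log_le_max_of_le {a b : ℝ → ℝ} (c : ℝ)
    (h : ∀ᶠ t in atTop, a t ≤ c + max (b t) (Real.log (Real.log t))) :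
    limsup (fun t => ((a t / Real.log t : ℝ) : EReal)) atTop ≤
      max (limsup (fun t => ((b t / Real.log t : ℝ) : EReal)) atTop) 0 := by
  have hc : Tendsto (fun t => ((c / Real.log t : ℝ) : EReal)) atTop (𝓝 0) :=
    EReal.tendsto_coe.2 (tendsto_const_nhds.div_atTop Real.tendsto_log_atTop)
  have hloglog :
      Tendsto (fun t => ((Real.log (Real.log t) / Real.log t : ℝ) : EReal)) atTop (𝓝 0) :=
    EReal.tendsto_coe.2
      (Real.isLittleO_log_id_atTop.tendsto_div_nhds_zero.comp Real.tendsto_log_atTop)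
  have hle : ∀ᶠ t in atTop, ((a t / Real.log t : ℝ) : EReal) ≤
      ((c / Real.log t : ℝ) : EReal) + max ((b t / Real.log t : ℝ) : EReal)
        ((Real.log (Real.log t) / Real.log t : ℝ) : EReal) := by
    filter_upwards [h, Real.tendsto_log_atTop.eventually_gt_atTop 0] with t ht hlog
    rw [← EReal.coe_strictMono.monotone.map_max, ← EReal.coe_add, EReal.coe_le_coe_iff,
      max_div_div_right hlog.le, ← add_div]
    exact div_le_div_of_nonneg_right ht hlog.le
  calc limsup (fun t => ((a t / Real.log t : ℝ) : EReal)) atTop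
      ≤ limsup ((fun t => ((c / Real.log t : ℝ) : EReal)) + fun t =>
          max ((b t / Real.log t : ℝ) : EReal) ((Real.log (Real.log t) / Real.log t : ℝ) : EReal))
          atTop := limsup_le_limsup hle
    _ ≤ _ := EReal.limsup_add_le (Or.inl (by simp [hc.limsup_eq])) (Or.inl (by simp [hc.limsup_eq]))
    _ = _ := by rw [hc.limsup_eq, zero_add, limsup_max, hloglog.limsup_eq]

noncomputable def maxModulus (f : ℂ → ℂ) (t : ℝ) : ℝ :=
  sSup ((‖f ·‖) '' sphere 0 t)

theorem growthOrder_eq_limsup_maxModulus (f : ℂ → ℂ) :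
    growthOrder f = limsup (fun t =>
      ((Real.log (Real.log (maxModulus f t)) / Real.log t : ℝ) : EReal)) atTop := by
  have hset (t : ℝ) : {x : ℝ | ∃ z : ℂ, ‖z‖ = t ∧ x = ‖f z‖} = (‖f ·‖) '' sphere 0 t := by
    ext x
    simp [eq_comm]
  simp only [growthOrder, maxModulus, hset]

section maxModulus

variable {f : ℂ → ℂ} {t : ℝ}

theorem norm_le_maxModulus (hf : Continuous f) {z : ℂ} (hz : ‖z‖ = t) : ‖f z‖ ≤ maxModulus f t :=
  le_csSup ((isCompact_sphere 0 t).bddAbove_image (continuous_norm.comp hf).continuousOn)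
    ⟨z, by simpa using hz, rfl⟩

theorem maxModulus_le (ht : 0 ≤ t) {B : ℝ} (h : ∀ z : ℂ, ‖z‖ = t → ‖f z‖ ≤ B) :
    maxModulus f t ≤ B :=
  csSup_le ((NormedSpace.sphere_nonempty.2 ht).image _)
    (forall_mem_image.2 fun z hz => h z (by simpa using hz))

theorem maxModulus_const (c : ℂ) (ht : 0 ≤ t) : maxModulus (fun _ => c) t = ‖c‖ := by
  rw [maxModulus, (NormedSpace.sphere_nonempty.2 ht).image_const, csSup_singleton]

theorem norm_le_maxModulus_of_norm_le (hf : Differentiable ℂ f) {z : ℂ} (hz : ‖z‖ ≤ t) :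
    ‖f z‖ ≤ maxModulus f t := by
  rcases (norm_nonneg z).trans hz |>.eq_or_lt with rfl | ht
  · rw [norm_le_zero_iff.1 hz]
    exact norm_le_maxModulus hf.continuous norm_zero
  refine Complex.norm_le_of_forall_mem_frontier_norm_le (isBounded_ball (x := 0) (r := t))
    hf.diffContOnCl (fun w hw => norm_le_maxModulus hf.continuous ?_) ?_
  · simpa [frontier_ball (0 : ℂ) ht.ne'] using hw
  · simpa [closure_ball (0 : ℂ) ht.ne'] using hz

theorem tendsto_maxModulus_atTop (hf : Differentiable ℂ f) (hb : ¬IsBounded (range f)) :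
    Tendsto (maxModulus f) atTop atTop := by
  rw [isBounded_iff_forall_norm_le] at hb
  push Not at hb
  refine tendsto_atTop.2 fun B => ?_
  obtain ⟨_, ⟨w, rfl⟩, hw⟩ := hb B
  filter_upwards [eventually_ge_atTop ‖w‖] with t ht
  exact hw.le.trans (norm_le_maxModulus_of_norm_le hf ht)

end maxModulus

theorem growthOrder_const (c : ℂ) : growthOrder (fun _ => c) = 0 := by
  rw [growthOrder_eq_limsup_maxModulus]
  refine Tendsto.limsup_eq ?_
  have hconst : (fun t => ((Real.log (Real.log ‖c‖) / Real.log t : ℝ) : EReal)) =ᶠ[atTop]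
      fun t => ((Real.log (Real.log (maxModulus (fun _ => c) t)) / Real.log t : ℝ) : EReal) := by
    filter_upwards [eventually_ge_atTop 0] with t ht
    rw [maxModulus_const c ht]
  exact (EReal.tendsto_coe.2 (tendsto_const_nhds.div_atTop Real.tendsto_log_atTop)).congr' hconst

theorem Differentiable.growthOrder_nonneg {f : ℂ → ℂ} (hf : Differentiable ℂ f) :
    0 ≤ growthOrder f := by
  by_cases hb : IsBounded (range f)
  · rw [funext fun z => hf.apply_eq_apply_of_bounded hb z 0, growthOrder_const]
  rw [growthOrder_eq_limsup_maxModulus]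
  refine le_limsup_of_frequently_le (Eventually.frequently ?_)
  filter_upwards [(tendsto_maxModulus_atTop hf hb).eventually_ge_atTop (Real.exp 1),
    eventually_ge_atTop 1] with t hM ht
  have hlogM : 1 ≤ Real.log (maxModulus f t) := by
    rwa [Real.le_log_iff_exp_le ((Real.exp_pos 1).trans_le hM)]
  exact_mod_cast div_nonneg (Real.log_nonneg hlogM) (Real.log_nonneg ht)

theorem growthOrder_le_of_maxModulus_le_pow {f g : ℂ → ℂ} (hg : Differentiable ℂ g) (N : ℕ)
    (h : ∀ᶠ t in atTop, maxModulus g t ≤ max (maxModulus f t) t ^ N) :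
    growthOrder g ≤ max (growthOrder f) 0 := by
  by_cases hb : IsBounded (range g)
  · rw [funext fun z => hg.apply_eq_apply_of_bounded hb z 0, growthOrder_const]
    exact le_max_right _ _
  rw [growthOrder_eq_limsup_maxModulus, growthOrder_eq_limsup_maxModulus]
  refine limsup_div_log_le_max_of_le (Real.log N) ?_
  filter_upwards [h, (tendsto_maxModulus_atTop hg hb).eventually_gt_atTop 1,
    eventually_gt_atTop 1] with t hgt hg1 ht
  set y := max (maxModulus f t) t with hy
  have hlog : Real.log (maxModulus g t) ≤ N * Real.log y := by
    rw [← Real.log_pow]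
    exact Real.log_le_log (by linarith) hgt
  have hpos : 0 < N * Real.log y := (Real.log_pos hg1).trans_le hlog
  calc Real.log (Real.log (maxModulus g t)) ≤ Real.log (N * Real.log y) :=
        Real.log_le_log (Real.log_pos hg1) hlog
    _ = Real.log N + Real.log (Real.log y) :=
        Real.log_mul (left_ne_zero_of_mul hpos.ne') (right_ne_zero_of_mul hpos.ne')
    _ ≤ _ := by
        gcongr
        rcases max_choice (maxModulus f t) t with hmax | hmax <;> rw [hy, hmax]
        exacts [le_max_left _ _, le_max_right _ _]

theorem growthOrder_le_of_norm_le {f g : ℂ → ℂ} (hg : Differentiable ℂ g) (hf : Continuous f)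
    {A : ℝ} {m : ℕ} (h : ∀ᶠ z in cobounded ℂ, ‖g z‖ ≤ A * ‖z‖ ^ m * (‖f z‖ + 1)) :
    growthOrder g ≤ max (growthOrder f) 0 := by
  refine growthOrder_le_of_maxModulus_le_pow hg (m + 3) ?_
  rw [← comap_norm_atTop, eventually_comap] at h
  filter_upwards [h, eventually_ge_atTop (max A 2)] with t hgt ht
  have hA : A ≤ t := (le_max_left _ _).trans ht
  have ht2 : 2 ≤ t := (le_max_right _ _).trans ht
  refine maxModulus_le (by linarith) fun z hz => ?_
  set y := max (maxModulus f t) t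
  have hty : t ≤ y := le_max_right _ _
  have hfy : ‖f z‖ ≤ y := (norm_le_maxModulus hf hz).trans (le_max_left _ _)
  calc ‖g z‖ ≤ A * t ^ m * (‖f z‖ + 1) := hz ▸ hgt z hz
    _ ≤ y * y ^ m * (y * y) := by
        refine mul_le_mul (mul_le_mul (hA.trans hty) (pow_le_pow_left₀ (by linarith) hty m)
          (by positivity) (by linarith)) (by nlinarith) (by positivity) (by positivity)
    _ = y ^ (m + 3) := by ring

theorem growthOrder_eq_of_eq_mul_add {P R : ℂ[X]} (hP : P ≠ 0) {f q : ℂ → ℂ}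
    (hf : Differentiable ℂ f) (hq : Differentiable ℂ q)
    (h : ∀ z, f z = P.eval z * q z + R.eval z) : growthOrder q = growthOrder f := by
  set m := P.natDegree + R.natDegree
  obtain ⟨CP, hCP, hPm⟩ := P.exists_eventually_norm_eval_le_mul_pow (n := m) (by omega)
  obtain ⟨CR, hCR, hRm⟩ := R.exists_eventually_norm_eval_le_mul_pow (n := m) (by omega)
  obtain ⟨c, hc, hPc⟩ := exists_pos_eventually_le_norm_eval hP
  have hone : ∀ᶠ z in cobounded ℂ, 1 ≤ ‖z‖ :=
    tendsto_norm_cobounded_atTop.eventually_ge_atTop 1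
  have hqf : growthOrder q ≤ max (growthOrder f) 0 := by
    refine growthOrder_le_of_norm_le hq hf.continuous (A := (1 + CR) / c) (m := m) ?_
    filter_upwards [hone, hRm, hPc] with z hz hRz hPz
    have hzm : 1 ≤ ‖z‖ ^ m := one_le_pow₀ hz
    have hqP : c * ‖q z‖ ≤ ‖f z‖ + CR * ‖z‖ ^ m := by
      calc c * ‖q z‖ ≤ ‖P.eval z‖ * ‖q z‖ := by gcongr
        _ = ‖f z - R.eval z‖ := by rw [← norm_mul, h z, add_sub_cancel_right]
        _ ≤ ‖f z‖ + CR * ‖z‖ ^ m := (norm_sub_le _ _).trans (by gcongr)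
    rw [div_mul_eq_mul_div, div_mul_eq_mul_div, le_div_iff₀ hc]
    nlinarith [mul_nonneg (sub_nonneg.2 hzm) (norm_nonneg (f z)),
      mul_nonneg (mul_nonneg hCR (zero_le_one.trans hzm)) (norm_nonneg (f z))]
  have hfq : growthOrder f ≤ max (growthOrder q) 0 := by
    refine growthOrder_le_of_norm_le hf hq.continuous (A := CP + CR) (m := m) ?_
    filter_upwards [hone, hPm, hRm] with z hz hPz hRz
    have hzm : 1 ≤ ‖z‖ ^ m := one_le_pow₀ hz
    calc ‖f z‖ ≤ ‖P.eval z‖ * ‖q z‖ + ‖R.eval z‖ := by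
          rw [h z, ← norm_mul]
          exact norm_add_le _ _
      _ ≤ CP * ‖z‖ ^ m * ‖q z‖ + CR * ‖z‖ ^ m := by gcongr
      _ ≤ (CP + CR) * ‖z‖ ^ m * (‖q z‖ + 1) := by
          nlinarith [mul_nonneg (mul_nonneg hCR (zero_le_one.trans hzm)) (norm_nonneg (q z)),
            mul_nonneg hCP (zero_le_one.trans hzm)]
  exact le_antisymm (hqf.trans_eq (max_eq_left hf.growthOrder_nonneg))
    (hfq.trans_eq (max_eq_left hq.growthOrder_nonneg))

/-- Fischer pair in dimension 1: for a nonzero polynomial P of degree k with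
leading part P_k (so that P_k*(D) r = 0 means the k-th derivative of r vanishes),
every entire f decomposes uniquely as f = P q + r with entire q, r and
iteratedDeriv k r = 0; moreover r is a polynomial of degree < k and q has the
same order as f. -/
theorem stmt17 (P : Polynomial ℂ) (hP : P ≠ 0) (k : ℕ) (hk : P.natDegree = k)
    (f : ℂ → ℂ) (hf : Differentiable ℂ f) :
    (∃! qr : (ℂ → ℂ) × (ℂ → ℂ),
        Differentiable ℂ qr.1 ∧ Differentiable ℂ qr.2 ∧
        (∀ z, f z = P.eval z * qr.1 z + qr.2 z) ∧ iteratedDeriv k qr.2 = 0) ∧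
    (∀ q r : ℂ → ℂ, Differentiable ℂ q → Differentiable ℂ r →
      (∀ z, f z = P.eval z * q z + r z) → iteratedDeriv k r = 0 →
      (∃ R : Polynomial ℂ, R.degree < (k : WithBot ℕ) ∧ ∀ z, r z = R.eval z) ∧
      growthOrder q = growthOrder f) := by
  have hdeg : P.degree = k := by rw [degree_eq_natDegree hP, hk]
  obtain ⟨q₀, R₀, hq₀, hR₀, hf₀⟩ := hf.exists_eq_eval_mul_add hP
  refine ⟨⟨(q₀, fun z => R₀.eval z), ⟨hq₀, R₀.differentiable, hf₀,
    iteratedDeriv_eval_eq_zero (hdeg ▸ hR₀)⟩, ?_⟩, fun q r hq hr hfqr hr0 => ?_⟩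
  · rintro ⟨q, r⟩ ⟨hq, hr, hfqr, hr0⟩
    obtain ⟨R, hR, hrR⟩ := hr.exists_polynomial_of_iteratedDeriv_eq_zero hr0
    obtain ⟨hqq₀, hRR₀⟩ := eq_zero_of_eval_mul_add_eq_zero hP (hq.continuous.sub hq₀.continuous)
      ((degree_sub_le _ _).trans_lt (max_lt (hdeg ▸ hR) hR₀)) fun z => by
        simp only [Pi.sub_apply, eval_sub]
        linear_combination hf₀ z - hfqr z - hrR z
    rw [sub_eq_zero] at hqq₀ hRR₀
    refine Prod.ext hqq₀ ?_
    ext z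
    rw [hrR z, hRR₀]
  · obtain ⟨R, hR, hrR⟩ := hr.exists_polynomial_of_iteratedDeriv_eq_zero hr0
    exact ⟨⟨R, hR, hrR⟩, growthOrder_eq_of_eq_mul_add hP hf hq fun z => by rw [hfqr z, hrR z]⟩
end

section
/- Let P_1 be a nonzero homogeneous polynomial of degree 1 on ℂ^d and let P_0 ∈ ℂ be a constant. Then (P_1 - P_0, P_1*(D)) is a Fischer pair for the space of entire functions on ℂ^d: for every entire function f there exist unique entire functions q, r with f = (P_1 - P_0) q + r and P_1*(D) r = 0. -/
/-!
Normalize `v`, a multiple of the conjugate coefficient vector `c̄`, so that `ℓ v = 1` for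
`ℓ z = ∑ cᵢ zᵢ`; then `P₁*(D)` is a nonzero multiple of the derivative along `v`. Write
`z = p + t • v` with `p` on the hyperplane `ℓ = P₀` and `t = ℓ z - P₀`. The remainder is
`r z = f p`, constant along `v`, and the quotient is `q z = (f (p + t • v) - f p) / t`. This
difference quotient is entire because it equals `∫₀¹ D_v f (p + τ t • v) dτ`, and `D_v f` is
holomorphic: by the Cauchy integral formula it is a parametric integral of translates of `f`.
Uniqueness: a remainder killed by `D_v` is constant along `v`, so if it vanishes on the
hyperplane it vanishes everywhere; the quotient then vanishes off the hyperplane, hence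
everywhere by continuity.
-/

open Metric Set Topology

section ParametricIntegral

variable {𝕜 H E : Type*} [RCLike 𝕜] [NormedAddCommGroup H] [NormedSpace 𝕜 H] [ProperSpace H]
  [NormedAddCommGroup E] [NormedSpace ℝ E] [NormedSpace 𝕜 E]

theorem differentiable_intervalIntegral_of_continuous_fderiv {F : H → ℝ → E}
    (hF : Continuous (Function.uncurry F)) (hdiff : ∀ θ, Differentiable 𝕜 (F · θ))
    (hF' : Continuous fun p : H × ℝ => fderiv 𝕜 (F · p.2) p.1) (a b : ℝ) :
    Differentiable 𝕜 fun x => ∫ θ in a..b, F x θ := by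
  have hslice : ∀ x, Continuous (F x) := fun x => hF.comp (continuous_const.prodMk continuous_id)
  intro x₀
  obtain ⟨M, hM⟩ := ((isCompact_closedBall x₀ 1).prod isCompact_uIcc).exists_bound_of_continuousOn
    hF'.continuousOn
  refine (intervalIntegral.hasFDerivAt_integral_of_dominated_of_fderiv_le (bound := fun _ => M)
    (ball_mem_nhds x₀ one_pos) (.of_forall fun x => (hslice x).aestronglyMeasurable)
    ((hslice x₀).intervalIntegrable a b)
    (hF'.comp (continuous_const.prodMk continuous_id)).aestronglyMeasurable
    (.of_forall fun θ hθ x hx => hM (x, θ) ⟨ball_subset_closedBall hx, uIoc_subset_uIcc hθ⟩)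
    intervalIntegrable_const
    (.of_forall fun θ _ x _ => (hdiff θ x).hasFDerivAt)).differentiableAt

end ParametricIntegral

section Holomorphic

variable {H E : Type*} [NormedAddCommGroup H] [NormedSpace ℂ H] [ProperSpace H]
  [NormedAddCommGroup E] [NormedSpace ℂ E]

/-- The Cauchy estimates bound the derivative of a holomorphic function by its oscillation on a
ball, and joint continuity makes that oscillation small uniformly on a compact ball. -/
theorem continuous_fderiv_of_continuous_uncurry {X : Type*} [TopologicalSpace X] {F : H → X → E}
    (hF : Continuous (Function.uncurry F)) (hdiff : ∀ θ, Differentiable ℂ (F · θ)) :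
    Continuous fun p : H × X => fderiv ℂ (F · p.2) p.1 := by
  refine continuous_iff_continuousAt.2 fun ⟨x₀, θ₀⟩ => Metric.tendsto_nhds.2 fun ε hε => ?_
  have hG : Continuous fun q : (H × X) × H => F (q.2 + (q.1.1 - x₀)) q.1.2 - F q.2 θ₀ :=
    (hF.comp ((continuous_snd.add (continuous_fst.fst.sub continuous_const)).prodMk
      continuous_fst.snd)).sub (hF.comp (continuous_snd.prodMk continuous_const))
  have hsmall : ∀ᶠ p : H × X in 𝓝 (x₀, θ₀), ∀ w ∈ closedBall x₀ 1,
      ‖F (w + (p.1 - x₀)) p.2 - F w θ₀‖ < ε / 4 := by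
    refine (isCompact_closedBall x₀ 1).eventually_forall_of_forall_eventually fun w _ => ?_
    exact (hG.tendsto ((x₀, θ₀), w)).norm.eventually_lt_const (by simpa using by positivity)
  filter_upwards [hsmall] with ⟨x, θ⟩ hp
  set G : H → E := fun w => F (w + (x - x₀)) θ - F w θ₀
  have hGd : Differentiable ℂ G := fun w =>
    ((hdiff θ).comp (differentiable_id.add_const _) w).sub (hdiff θ₀ w)
  have hfderivG : fderiv ℂ G x₀ = fderiv ℂ (F · θ) x - fderiv ℂ (F · θ₀) x₀ := by
    have hshift : DifferentiableAt ℂ (fun w => F (w + (x - x₀)) θ) x₀ :=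
      (hdiff θ).comp (differentiable_id.add_const _) x₀
    rw [fderiv_fun_sub hshift (hdiff θ₀ x₀), fderiv_comp_add_right (f := (F · θ)), add_sub_cancel]
  have hmaps : MapsTo G (ball x₀ 1) (closedBall (G x₀) (ε / 2)) := fun w hw => by
    rw [mem_closedBall, dist_eq_norm]
    have h1 := hp w (ball_subset_closedBall hw)
    have h2 := hp x₀ (mem_closedBall_self zero_le_one)
    calc ‖G w - G x₀‖ ≤ ‖G w‖ + ‖G x₀‖ := norm_sub_le _ _
      _ ≤ ε / 2 := by simp only [G] at *; linarith
  have := Complex.norm_fderiv_le_div_of_mapsTo_ball hGd.differentiableOn hmaps one_pos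
  rw [hfderivG] at this
  rw [dist_eq_norm]
  linarith

theorem differentiable_intervalIntegral_of_continuous_uncurry [CompleteSpace E] {F : H → ℝ → E}
    (hF : Continuous (Function.uncurry F)) (hdiff : ∀ θ, Differentiable ℂ (F · θ)) (a b : ℝ) :
    Differentiable ℂ fun x => ∫ θ in a..b, F x θ :=
  differentiable_intervalIntegral_of_continuous_fderiv hF hdiff
    (continuous_fderiv_of_continuous_uncurry hF hdiff) a b

/-- Cauchy's integral formula for the derivative along the complex line through `z` in direction
`v` exhibits it as a parametric integral of translates of `f`. -/
theorem differentiable_fderiv_apply [CompleteSpace E] {f : H → E} (hf : Differentiable ℂ f)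
    (v : H) : Differentiable ℂ fun z => fderiv ℂ f z v := by
  have hcauchy : ∀ z, fderiv ℂ f z v = (2 * Real.pi * Complex.I)⁻¹ •
      ∫ θ in (0)..2 * Real.pi, deriv (circleMap 0 1) θ •
        (1 / (circleMap 0 1 θ - 0) ^ 2) • f (z + circleMap 0 1 θ • v) := by
    intro z
    have hline : Differentiable ℂ fun u : ℂ => f (z + u • v) :=
      hf.comp ((differentiable_id.smul_const v).const_add z)
    have := (hline.differentiableOn (s := closedBall 0 1)).deriv_eq_smul_circleIntegral one_pos
    rw [(hf _).deriv_comp_add_smul, zero_smul, add_zero] at this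
    rw [eq_inv_smul_iff₀ Complex.two_pi_I_ne_zero]
    exact this.symm
  simp_rw [hcauchy]
  refine Differentiable.const_smul (differentiable_intervalIntegral_of_continuous_uncurry ?_
    (fun θ => ((hf.comp (differentiable_id.add_const _)).const_smul _).const_smul _) _ _) _
  have hderiv : Continuous fun θ => deriv (circleMap 0 1) θ := by
    simp only [deriv_circleMap]; fun_prop
  have hweight : Continuous fun θ => (1 / (circleMap 0 1 θ - 0) ^ 2 : ℂ) :=
    continuous_const.div (by fun_prop) fun θ => by simp [circleMap_ne_center one_ne_zero]
  exact (hderiv.comp continuous_snd).smul ((hweight.comp continuous_snd).smul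
    (hf.continuous.comp (continuous_fst.add
      (((continuous_circleMap 0 1).comp continuous_snd).smul continuous_const))))

/-- The difference quotient `(f (x + s • v) - f x) / s`, also at `s = 0`, written as an integral
so that it is visibly holomorphic in `(x, s)`. -/
noncomputable def lineSlope (f : H → E) (v x : H) (s : ℂ) : E :=
  ∫ τ in (0 : ℝ)..1, fderiv ℂ f (x + ((τ : ℂ) * s) • v) v

variable [CompleteSpace E] {f : H → E}

theorem sub_eq_smul_lineSlope (hf : Differentiable ℂ f) (v x : H) (s : ℂ) :
    f (x + s • v) - f x = s • lineSlope f v x s := by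
  have hpath : ∀ τ : ℝ, HasDerivAt (fun τ : ℝ => x + ((τ : ℂ) * s) • v) (s • v) τ := by
    intro τ
    simpa using (((Complex.ofRealCLM.hasDerivAt (x := τ)).mul_const s).smul_const v).const_add x
  have hderiv : ∀ τ : ℝ, HasDerivAt (fun τ : ℝ => f (x + ((τ : ℂ) * s) • v))
      (s • fderiv ℂ f (x + ((τ : ℂ) * s) • v) v) τ := by
    intro τ
    have := ((hf _).hasFDerivAt.restrictScalars ℝ).comp_hasDerivAt τ (hpath τ)
    rwa [ContinuousLinearMap.coe_restrictScalars', map_smul] at this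
  have hcont : Continuous fun τ : ℝ => s • fderiv ℂ f (x + ((τ : ℂ) * s) • v) v :=
    ((differentiable_fderiv_apply hf v).continuous.comp (by fun_prop)).const_smul s
  rw [lineSlope, ← intervalIntegral.integral_smul,
    intervalIntegral.integral_eq_sub_of_hasDerivAt (fun τ _ => hderiv τ)
      (hcont.intervalIntegrable _ _)]
  simp

theorem differentiable_lineSlope (hf : Differentiable ℂ f) (v : H) :
    Differentiable ℂ fun p : H × ℂ => lineSlope f v p.1 p.2 := by
  have hDv := differentiable_fderiv_apply hf v
  refine differentiable_intervalIntegral_of_continuous_uncurry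
    (F := fun (p : H × ℂ) (τ : ℝ) => fderiv ℂ f (p.1 + ((τ : ℂ) * p.2) • v) v) ?_
    (fun τ => hDv.comp ?_) 0 1
  · exact hDv.continuous.comp (by fun_prop)
  · fun_prop

end Holomorphic

section LineConstancy

variable {𝕜 E F : Type*} [RCLike 𝕜] [NormedAddCommGroup E] [NormedSpace 𝕜 E]
  [NormedAddCommGroup F] [NormedSpace 𝕜 F] {r : E → F}

theorem forall_fderiv_apply_eq_zero_iff (hr : Differentiable 𝕜 r) (v : E) :
    (∀ z, fderiv 𝕜 r z v = 0) ↔ ∀ z (t : 𝕜), r (z + t • v) = r z := by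
  have hline : ∀ z t, fderiv 𝕜 r (z + t • v) v = deriv (fun t : 𝕜 => r (z + t • v)) t :=
    fun z t => ((hr _).deriv_comp_add_smul).symm
  constructor
  · intro h z t
    have hd : Differentiable 𝕜 fun t : 𝕜 => r (z + t • v) := hr.comp (by fun_prop)
    simpa using is_const_of_deriv_eq_zero hd (fun t => by rw [← hline, h]) t 0
  · intro h z
    simpa [h] using hline z 0

end LineConstancy

section FischerPair

variable {E : Type*} [NormedAddCommGroup E] [NormedSpace ℂ E] {ℓ : E →L[ℂ] ℂ} {v : E}

variable (ℓ v) in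
noncomputable def hyperplaneProj (P0 : ℂ) (z : E) : E := z - (ℓ z - P0) • v

theorem hyperplaneProj_add_smul_self (P0 : ℂ) (z : E) :
    hyperplaneProj ℓ v P0 z + (ℓ z - P0) • v = z :=
  sub_add_cancel _ _

theorem apply_hyperplaneProj (hv : ℓ v = 1) (P0 : ℂ) (z : E) :
    ℓ (hyperplaneProj ℓ v P0 z) = P0 := by
  simp [hyperplaneProj, hv]

theorem hyperplaneProj_add_smul (hv : ℓ v = 1) (P0 : ℂ) (z : E) (t : ℂ) :
    hyperplaneProj ℓ v P0 (z + t • v) = hyperplaneProj ℓ v P0 z := by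
  simp only [hyperplaneProj, map_add, map_smul, hv, smul_eq_mul, mul_one]
  module

theorem eq_zero_of_mul_add_eq_zero (hv : ℓ v = 1) (P0 : ℂ) {q r : E → ℂ} (hq : Continuous q)
    (hr : Differentiable ℂ r) (hrv : ∀ z, fderiv ℂ r z v = 0) (h : ∀ z, (ℓ z - P0) * q z + r z = 0) : q = 0 ∧ r = 0 := by
  have hconst := (forall_fderiv_apply_eq_zero_iff hr v).1 hrv
  have hr0 : r = 0 := funext fun z => by
    rw [← hyperplaneProj_add_smul_self P0 z, hconst, Pi.zero_apply]
    simpa [apply_hyperplaneProj hv P0] using h (hyperplaneProj ℓ v P0 z)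
  refine ⟨funext fun z => ?_, hr0⟩
  -- `q` vanishes off the hyperplane `ℓ = P0`, which meets each line in direction `v` once.
  have hline : Continuous fun t : ℂ => q (z + t • v) := hq.comp (by fun_prop)
  have hoff : Set.EqOn (fun t : ℂ => q (z + t • v)) 0 {P0 - ℓ z}ᶜ := fun t ht => by
    have hne : ℓ (z + t • v) - P0 ≠ 0 := by
      simp only [map_add, map_smul, hv, smul_eq_mul, mul_one]
      intro h0
      exact ht (by simp only [Set.mem_singleton_iff]; linear_combination h0)
    have hz := h (z + t • v)
    rw [hr0, Pi.zero_apply, add_zero] at hz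
    exact (mul_eq_zero.1 hz).resolve_left hne
  simpa only [zero_smul, add_zero, Pi.zero_apply] using
    congrFun (hline.ext_on (dense_compl_singleton _) continuous_zero hoff) 0

variable [ProperSpace E]

theorem exists_mul_add_eq (hv : ℓ v = 1) (P0 : ℂ) {f : E → ℂ} (hf : Differentiable ℂ f) :
    ∃ q r : E → ℂ, Differentiable ℂ q ∧ Differentiable ℂ r ∧
      (∀ z, f z = (ℓ z - P0) * q z + r z) ∧ ∀ z, fderiv ℂ r z v = 0 := by
  have hproj : Differentiable ℂ (hyperplaneProj ℓ v P0) := by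
    unfold hyperplaneProj; fun_prop
  refine ⟨fun z => lineSlope f v (hyperplaneProj ℓ v P0 z) (ℓ z - P0),
    fun z => f (hyperplaneProj ℓ v P0 z), ?_, hf.comp hproj, fun z => ?_, ?_⟩
  · exact (differentiable_lineSlope hf v).comp (hproj.prodMk (by fun_prop))
  · rw [← smul_eq_mul, ← sub_eq_smul_lineSlope hf, hyperplaneProj_add_smul_self, sub_add_cancel]
  · refine (forall_fderiv_apply_eq_zero_iff (hf.comp hproj) v).2 fun z t => ?_
    simp only [Function.comp, hyperplaneProj_add_smul hv P0]

theorem existsUnique_mul_add_eq (hv : ℓ v = 1) (P0 : ℂ) {f : E → ℂ} (hf : Differentiable ℂ f) :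
    ∃! qr : (E → ℂ) × (E → ℂ), Differentiable ℂ qr.1 ∧ Differentiable ℂ qr.2 ∧
      (∀ z, f z = (ℓ z - P0) * qr.1 z + qr.2 z) ∧ ∀ z, fderiv ℂ qr.2 z v = 0 := by
  obtain ⟨q, r, hq, hr, hf_eq, hrv⟩ := exists_mul_add_eq hv P0 hf
  refine ⟨(q, r), ⟨hq, hr, hf_eq, hrv⟩, ?_⟩
  rintro ⟨q', r'⟩ ⟨hq', hr', hf_eq', hrv'⟩
  obtain ⟨hqq, hrr⟩ := eq_zero_of_mul_add_eq_zero hv P0 (hq'.sub hq).continuous (hr'.sub hr)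
    (fun z => by rw [fderiv_sub (hr' z) (hr z)]; simp [hrv, hrv'])
    (fun z => by simp only [Pi.sub_apply]; linear_combination hf_eq z - hf_eq' z)
  simp only [Prod.mk.injEq]
  exact ⟨sub_eq_zero.1 hqq, sub_eq_zero.1 hrr⟩

end FischerPair

/-- Fischer pair for a degree-one polynomial: if P1(z) = Σ c_i z_i is a nonzero
linear form and P0 a constant, then every entire function f on C^d decomposes
uniquely as f = (P1 - P0) q + r with q, r entire and P1*(D) r = 0. -/
theorem stmt18 {d : ℕ} (c : Fin d → ℂ) (hc : c ≠ 0) (P0 : ℂ)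
    (f : (Fin d → ℂ) → ℂ) (hf : Differentiable ℂ f) :
    ∃! qr : ((Fin d → ℂ) → ℂ) × ((Fin d → ℂ) → ℂ),
      Differentiable ℂ qr.1 ∧ Differentiable ℂ qr.2 ∧
      (∀ z, f z = ((∑ i, c i * z i) - P0) * qr.1 z + qr.2 z) ∧
      (∀ z, ∑ i, (starRingEnd ℂ) (c i) * fderiv ℂ qr.2 z (Pi.single i 1) = 0) := by
  set ℓ : (Fin d → ℂ) →L[ℂ] ℂ := ∑ i, c i • ContinuousLinearMap.proj i
  have hℓ : ∀ z, ℓ z = ∑ i, c i * z i := by simp [ℓ]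
  have hN : ℓ (star c) ≠ 0 := by
    rw [hℓ]
    open ComplexOrder in exact dotProduct_self_star_eq_zero.not.2 hc
  set N := ℓ (star c)
  have hv : ℓ (N⁻¹ • star c) = 1 := by rw [map_smul, smul_eq_mul, inv_mul_cancel₀ hN]
  have hop : ∀ L : (Fin d → ℂ) →L[ℂ] ℂ,
      ∑ i, (starRingEnd ℂ) (c i) * L (Pi.single i 1) = N * L (N⁻¹ • star c) := fun L => by
    rw [map_smul, smul_eq_mul, mul_inv_cancel_left₀ hN]
    conv_rhs => rw [pi_eq_sum_univ' (star c)]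
    simp [map_sum]
  refine (existsUnique_congr fun qr => ?_).1 (existsUnique_mul_add_eq hv P0 hf)
  simp only [hℓ, hop, mul_eq_zero, hN, false_or]
end
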